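/- arXiv:2408.02400 — 7 statements merged into one kernel-verified Lean document; each statement's English description precedes it below -/
import Mathlib

section
/- For every natural number m, there exists a finite simple graph G on more than m vertices such that the clique number of G is less than 5, the cochromatic number of G equals 4, and the chromatic number of G equals 7. (In particular, there are infinitely many graphs G with ω(G) < 5 and χ(G) > ζ(G) + 2.) -/
set_option maxRecDepth 40000
set_option synthInstance.maxSize 2000
set_option synthInstance.maxHeartbeats 1000000
set_option maxHeartbeats 1000000

/-- A set of vertices is *independent* if it induces no edges. -/
def SimpleGraph.IsIndependentSet {V : Type*} (G : SimpleGraph V) (s : Set V) : Prop :=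
  s.Pairwise fun u v => ¬ G.Adj u v

/-- A set of vertices is *homogeneous* if it is independent or a clique. -/
def SimpleGraph.IsHomogeneousSet {V : Type*} (G : SimpleGraph V) (s : Set V) : Prop :=
  G.IsIndependentSet s ∨ G.IsClique s

/-- The *cochromatic number* of a finite graph: the minimum size of a partition of the
vertex set into homogeneous sets (phrased via functions to `Fin k` with homogeneous fibers). -/
noncomputable def SimpleGraph.cochromaticNumber {V : Type*} [Fintype V]
    (G : SimpleGraph V) : ℕ :=
  sInf {k | ∃ p : V → Fin k, ∀ i, G.IsHomogeneousSet (p ⁻¹' {i})}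

namespace SteinerAux

/-- Adjacency bitmasks of the 13-vertex core graph. -/
def mask' : ℕ → ℕ
  | 0 => 1998 | 1 => 2685 | 2 => 7707 | 3 => 5335 | 4 => 6382 | 5 => 7122
  | 6 => 955 | 7 => 5497 | 8 => 7905 | 9 => 3431 | 10 => 7053 | 11 => 5942
  | 12 => 3516 | _ => 0

/-- The core 13-vertex graph: three disjoint `K₄`s `{0,1,2,3}, {4,5,6,7}, {8,9,10,11}`
with cross edges chosen so that the independence number is `2` and there is no `K₅`,
together with a gadget vertex `12` adjacent to everything except the clique `{0,1,6,9}`. -/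
def G0 : SimpleGraph (Fin 13) where
  Adj a b := (mask' a.val).testBit b.val
  symm := ⟨fun a b h =>
    (by decide : ∀ a b : Fin 13, (mask' a.val).testBit b.val = true →
      (mask' b.val).testBit a.val = true) a b h⟩
  loopless := ⟨fun a h =>
    (by decide : ∀ a : Fin 13, ¬ (mask' a.val).testBit a.val = true) a h⟩

instance : DecidableRel G0.Adj := fun a b =>
  inferInstanceAs (Decidable ((mask' a.val).testBit b.val = true))

/-- The core graph has independence number at most 2. -/
lemma G0_no_indep3 : ∀ a b c : Fin 13, a ≠ b → a ≠ c → b ≠ c →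
    ¬ G0.Adj a b → ¬ G0.Adj a c → ¬ G0.Adj b c → False := by decide

lemma nat_no_K5 : ∀ e < 13, ∀ d < e, ∀ c < d, ∀ b < c, ∀ a < b,
    ¬((mask' a).testBit b ∧ (mask' a).testBit c ∧ (mask' a).testBit d ∧ (mask' a).testBit e ∧
      (mask' b).testBit c ∧ (mask' b).testBit d ∧ (mask' b).testBit e ∧
      (mask' c).testBit d ∧ (mask' c).testBit e ∧ (mask' d).testBit e) := by decide

/-- The non-neighbors of the gadget vertex `12` form a clique. -/
lemma G0_Tclique : ∀ x y : Fin 13, x ≠ 12 → y ≠ 12 → x ≠ y →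
    ¬ G0.Adj x 12 → ¬ G0.Adj y 12 → G0.Adj x y := by decide

/-- An explicit proper 7-coloring of the core graph. -/
def col0 : Fin 13 → Fin 7 := ![0, 1, 2, 3, 0, 4, 5, 1, 2, 3, 4, 5, 6]

lemma col0_valid : ∀ x y : Fin 13, G0.Adj x y → col0 x ≠ col0 y := by decide

/-- The homogeneous partition into the three `K₄`s and `{12}`. -/
def cls : Fin 13 → Fin 4 := ![0, 0, 0, 0, 1, 1, 1, 1, 2, 2, 2, 2, 3]

lemma cls_clique : ∀ i : Fin 4, i ≠ 3 → ∀ x y : Fin 13,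
    cls x = i → cls y = i → x ≠ y → G0.Adj x y := by decide

lemma cls_three : ∀ x : Fin 13, cls x = 3 → x = 12 := by decide

/-- The core graph has no `K₅`. -/
lemma G0_cliqueFree5 : G0.CliqueFree 5 := by
  intro t ht
  have hlen : (t.sort (· ≤ ·)).length = 5 := by rw [Finset.length_sort]; exact ht.2
  have hsort := (Finset.sortedLT_sort t).pairwise
  have hmem : ∀ x ∈ t.sort (· ≤ ·), x ∈ t := fun x hx => (Finset.mem_sort _).mp hx
  rcases hl : t.sort (· ≤ ·) with _ | ⟨a, _ | ⟨b, _ | ⟨c, _ | ⟨d, _ | ⟨e, _ | ⟨f, tl⟩⟩⟩⟩⟩⟩ <;>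
    rw [hl] at hlen <;> simp at hlen
  rw [hl] at hsort hmem
  rw [List.pairwise_cons] at hsort
  obtain ⟨ha', hsort⟩ := hsort
  rw [List.pairwise_cons] at hsort
  obtain ⟨hb', hsort⟩ := hsort
  rw [List.pairwise_cons] at hsort
  obtain ⟨hc', hsort⟩ := hsort
  rw [List.pairwise_cons] at hsort
  obtain ⟨hd', -⟩ := hsort
  have hab : a < b := ha' b (by simp)
  have hac : a < c := ha' c (by simp)
  have had : a < d := ha' d (by simp)
  have hae : a < e := ha' e (by simp)
  have hbc : b < c := hb' c (by simp)
  have hbd : b < d := hb' d (by simp)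
  have hbe : b < e := hb' e (by simp)
  have hcd : c < d := hc' d (by simp)
  have hce : c < e := hc' e (by simp)
  have hde : d < e := hd' e (by simp)
  have ma : a ∈ t := hmem a (by simp)
  have mb : b ∈ t := hmem b (by simp)
  have mc : c ∈ t := hmem c (by simp)
  have md : d ∈ t := hmem d (by simp)
  have me : e ∈ t := hmem e (by simp)
  have adj : ∀ x y : Fin 13, x ∈ t → y ∈ t → x < y → G0.Adj x y := fun x y hx hy hlt =>
    ht.1 hx hy (ne_of_lt hlt)
  exact nat_no_K5 e.val e.isLt d.val hde c.val hcd b.val hbc a.val hab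
    ⟨adj a b ma mb hab, adj a c ma mc hac, adj a d ma md had, adj a e ma me hae,
     adj b c mb mc hbc, adj b d mb md hbd, adj b e mb me hbe,
     adj c d mc md hcd, adj c e mc me hce, adj d e md me hde⟩

/-- The ambient graph: the core graph together with `m+1` isolated vertices. -/
def BigG (m : ℕ) : SimpleGraph (Fin 13 ⊕ Fin (m + 1)) where
  Adj a b := match a, b with
    | .inl x, .inl y => G0.Adj x y
    | _, _ => False
  symm := ⟨by rintro (x | x) (y | y) h <;> first | exact G0.adj_symm h | exact h.elim⟩
  loopless := ⟨by rintro (x | x) h; exact G0.irrefl h; exact h.elim⟩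

lemma bigG_adj_inl {m : ℕ} {x y : Fin 13} :
    (BigG m).Adj (Sum.inl x) (Sum.inl y) ↔ G0.Adj x y := Iff.rfl

lemma bigG_not_adj_inr {m : ℕ} (a : Fin 13 ⊕ Fin (m + 1)) (e : Fin (m + 1)) :
    ¬ (BigG m).Adj a (Sum.inr e) := by rcases a with x | x <;> exact fun h => h.elim

def Q12 : Finset (Fin 13) := Finset.univ.filter (fun v => v ≠ 12)

lemma Q12_card : Q12.card = 12 := by decide

/-- The ambient graph is not 6-colorable. -/
lemma not_colorable_six (m : ℕ) : ¬ (BigG m).Colorable 6 := by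
  rintro ⟨C⟩
  set c : Fin 13 → Fin 6 := fun v => C (Sum.inl v) with hc
  have hval : ∀ x y : Fin 13, G0.Adj x y → c x ≠ c y := fun x y h => C.valid h
  have hfib : ∀ k : Fin 6, (Q12.filter (fun v => c v = k)).card ≤ 2 := by
    intro k
    by_contra hgt
    push_neg at hgt
    obtain ⟨x, y, z, hx, hy, hz, hxy, hxz, hyz⟩ := Finset.two_lt_card_iff.mp hgt
    have hx' := (Finset.mem_filter.mp hx).2
    have hy' := (Finset.mem_filter.mp hy).2
    have hz' := (Finset.mem_filter.mp hz).2
    exact G0_no_indep3 x y z hxy hxz hyz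
      (fun h => hval x y h (hx'.trans hy'.symm))
      (fun h => hval x z h (hx'.trans hz'.symm))
      (fun h => hval y z h (hy'.trans hz'.symm))
  have hsum : ∑ k ∈ (Finset.univ : Finset (Fin 6)), (Q12.filter (fun v => c v = k)).card = 12 := by
    rw [← Finset.card_eq_sum_card_fiberwise (fun x _ => Finset.mem_univ (c x))]
    exact Q12_card
  have ha2 : 2 ≤ (Q12.filter (fun v => c v = c 12)).card := by
    have h1 : ∑ k ∈ (Finset.univ : Finset (Fin 6)).erase (c 12),
        (Q12.filter (fun v => c v = k)).card + (Q12.filter (fun v => c v = c 12)).card = 12 := by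
      rw [Finset.sum_erase_add _ _ (Finset.mem_univ _)]
      exact hsum
    have h2 : ∑ k ∈ (Finset.univ : Finset (Fin 6)).erase (c 12),
        (Q12.filter (fun v => c v = k)).card ≤ 10 := by
      refine le_trans (Finset.sum_le_card_nsmul _ _ 2 (fun k _ => hfib k)) ?_
      rw [Finset.card_erase_of_mem (Finset.mem_univ _)]
      simp
    omega
  obtain ⟨x, y, hx, hy, hxy⟩ := Finset.one_lt_card_iff.mp
    (show 1 < (Q12.filter (fun v => c v = c 12)).card by omega)
  have hx2 := (Finset.mem_filter.mp hx).2
  have hy2 := (Finset.mem_filter.mp hy).2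
  have hx12 : x ≠ 12 := (Finset.mem_filter.mp (Finset.mem_filter.mp hx).1).2
  have hy12 : y ≠ 12 := (Finset.mem_filter.mp (Finset.mem_filter.mp hy).1).2
  have hnx : ¬ G0.Adj x 12 := fun h => hval x 12 h hx2
  have hny : ¬ G0.Adj y 12 := fun h => hval y 12 h hy2
  exact hval x y (G0_Tclique x y hx12 hy12 hxy hnx hny) (hx2.trans hy2.symm)

/-- The ambient graph is 7-colorable. -/
lemma colorable_seven (m : ℕ) : (BigG m).Colorable 7 := by
  refine ⟨SimpleGraph.Coloring.mk
    (fun w => match w with | .inl v => col0 v | .inr _ => (6 : Fin 7)) ?_⟩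
  rintro (x | x) (y | y) h
  · exact col0_valid x y h
  · exact h.elim
  · exact h.elim
  · exact h.elim

/-- The ambient graph has no `K₅`. -/
lemma bigG_cliqueFree5 (m : ℕ) : (BigG m).CliqueFree 5 := by
  intro t ht
  have hinl : ∀ w ∈ t, ∃ v : Fin 13, w = Sum.inl v := by
    intro w hw
    rcases w with v | e
    · exact ⟨v, rfl⟩
    · exfalso
      have h2 : 1 < t.card := by rw [ht.2]; omega
      obtain ⟨u, u', hu, hu', huu⟩ := Finset.one_lt_card_iff.mp h2
      rcases eq_or_ne u (Sum.inr e) with rfl | hne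
      · exact bigG_not_adj_inr u' e ((BigG m).adj_symm (ht.1 hu hu' huu))
      · rcases eq_or_ne u' (Sum.inr e) with rfl | hne'
        · exact bigG_not_adj_inr u e (ht.1 hu hw hne)
        · exact bigG_not_adj_inr u e (ht.1 hu hw hne)
  set f : Fin 13 ⊕ Fin (m + 1) → Fin 13 := fun w => match w with | .inl v => v | .inr _ => 0
    with hf
  have hinj : Set.InjOn f ↑t := by
    intro x hx y hy hfeq
    obtain ⟨vx, rfl⟩ := hinl x hx
    obtain ⟨vy, rfl⟩ := hinl y hy
    simpa [hf] using hfeq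
  refine G0_cliqueFree5 (t.image f) ⟨?_, ?_⟩
  · intro x hx y hy hne
    obtain ⟨wx, hwx, hfx⟩ := Finset.mem_image.mp hx
    obtain ⟨wy, hwy, hfy⟩ := Finset.mem_image.mp hy
    obtain ⟨vx, rfl⟩ := hinl wx hwx
    obtain ⟨vy, rfl⟩ := hinl wy hwy
    have hvx : vx = x := hfx
    have hvy : vy = y := hfy
    subst hvx hvy
    exact ht.1 hwx hwy (fun h => hne (by injection h))
  · rw [Finset.card_image_of_injOn hinj, ht.2]

end SteinerAux

open SteinerAux in
/-- **Theorem 3 (main counterexample theorem).** For every natural number `m` there exists a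
finite simple graph `G` on more than `m` vertices with clique number less than `5`,
cochromatic number equal to `4`, and chromatic number equal to `7`.  In particular there are
infinitely many graphs `G` with `ω(G) < 5` and `χ(G) > ζ(G) + 2`. -/
theorem exists_large_graph_cliqueLT5_cochromatic4_chromatic7 (m : ℕ) :
    ∃ (V : Type) (inst : Fintype V) (G : SimpleGraph V),
      m < @Fintype.card V inst ∧
      G.cliqueNum < 5 ∧
      @SimpleGraph.cochromaticNumber V inst G = 4 ∧
      G.chromaticNumber = 7 := by
  refine ⟨Fin 13 ⊕ Fin (m + 1), inferInstance, BigG m, ?_, ?_, ?_, ?_⟩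
  · simp only [Fintype.card_sum, Fintype.card_fin]
    omega
  · -- clique number < 5
    have hle : (BigG m).cliqueNum ≤ 4 := by
      refine csSup_le ⟨0, ∅, SimpleGraph.isNClique_empty.mpr rfl⟩ ?_
      rintro n ⟨s, hs⟩
      by_contra hgt
      push_neg at hgt
      obtain ⟨t5, hsub, hc5⟩ := Finset.exists_subset_card_eq (s := s) (n := 5) (by rw [hs.2]; omega)
      exact bigG_cliqueFree5 m t5 ⟨hs.1.subset hsub, hc5⟩
    omega
  · -- cochromatic number = 4
    have hmem4 : (4 : ℕ) ∈ {k | ∃ p : (Fin 13 ⊕ Fin (m + 1)) → Fin k,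
        ∀ i, (BigG m).IsHomogeneousSet (p ⁻¹' {i})} := by
      refine ⟨fun w => match w with | .inl v => cls v | .inr _ => (3 : Fin 4), fun i => ?_⟩
      by_cases hi : i = 3
      · subst hi
        left
        intro x hx y hy hxy
        simp only [Set.mem_preimage, Set.mem_singleton_iff] at hx hy
        rcases x with v | e <;> rcases y with w | f
        · have hv := cls_three v hx
          have hw := cls_three w hy
          subst hv; subst hw
          exact absurd rfl hxy
        · exact fun h => h.elim
        · exact fun h => h.elim
        · exact fun h => h.elim
      · right
        intro x hx y hy hxy
        simp only [Set.mem_preimage, Set.mem_singleton_iff] at hx hy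
        rcases x with v | e
        · rcases y with w | f
          · exact cls_clique i hi v w hx hy (fun h => hxy (by rw [h]))
          · exact absurd hy.symm hi
        · exact absurd hx.symm hi
    refine le_antisymm (Nat.sInf_le hmem4) (le_csInf ⟨4, hmem4⟩ ?_)
    rintro k ⟨p, hp⟩
    by_contra hk
    push_neg at hk
    have hcard : (Finset.univ : Finset (Fin k)).card * 4 <
        (Finset.univ : Finset (Fin 13)).card := by
      simp only [Finset.card_univ, Fintype.card_fin]
      omega
    obtain ⟨b, _, hb⟩ := Finset.exists_lt_card_fiber_of_mul_lt_card_of_maps_to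
      (f := fun v : Fin 13 => p (Sum.inl v)) (fun a _ => Finset.mem_univ _) hcard
    rcases hp b with hind | hcli
    · obtain ⟨x, y, z, hx, hy, hz, hxy, hxz, hyz⟩ := Finset.two_lt_card_iff.mp
        (by omega : 2 < (Finset.univ.filter (fun v : Fin 13 => p (Sum.inl v) = b)).card)
      have hx' : p (Sum.inl x) = b := (Finset.mem_filter.mp hx).2
      have hy' : p (Sum.inl y) = b := (Finset.mem_filter.mp hy).2
      have hz' : p (Sum.inl z) = b := (Finset.mem_filter.mp hz).2
      exact G0_no_indep3 x y z hxy hxz hyz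
        (fun h => hind hx' hy' (fun he => hxy (by injection he)) h)
        (fun h => hind hx' hz' (fun he => hxz (by injection he)) h)
        (fun h => hind hy' hz' (fun he => hyz (by injection he)) h)
    · obtain ⟨s5, hsub, hc5⟩ := Finset.exists_subset_card_eq
        (by omega : 5 ≤ (Finset.univ.filter (fun v : Fin 13 => p (Sum.inl v) = b)).card)
      refine G0_cliqueFree5 s5 ⟨?_, hc5⟩
      intro x hx y hy hne
      have hx' : p (Sum.inl x) = b := (Finset.mem_filter.mp (hsub hx)).2
      have hy' : p (Sum.inl y) = b := (Finset.mem_filter.mp (hsub hy)).2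
      exact hcli hx' hy' (fun he => hne (by injection he))
  · -- chromatic number = 7
    have hle := SimpleGraph.chromaticNumber_le_iff_colorable.mpr (colorable_seven m)
    have hgt : ¬ (BigG m).chromaticNumber ≤ (6 : ℕ) := fun h =>
      not_colorable_six m (SimpleGraph.chromaticNumber_le_iff_colorable.mp h)
    have h7 : ((6 : ℕ) : ℕ∞) < (BigG m).chromaticNumber := not_le.mp hgt
    refine le_antisymm ?_ ?_
    · exact_mod_cast hle
    · have := Order.add_one_le_of_lt h7
      exact le_of_eq_of_le (by norm_num) this
end

section
/- Let n > 2 be an integer, let R be a positive integer such that every graph on at least R vertices with clique number less than n contains an independent set of size n, and let g be an integer such that every graph on fewer than R vertices with clique number less than n has chromatic number at most g. Then every graph G with ω(G) < n and |V(G)| ≥ R satisfies χ(G) ≤ ⌈(|V(G)| − R + 1)/n⌉ + g. -/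
open SimpleGraph

lemma cliqueNum_induce_le {V : Type} [Fintype V] (G : SimpleGraph V) (t : Set V)
    [Fintype t] : (G.induce t).cliqueNum ≤ G.cliqueNum := by
  obtain ⟨s, hs⟩ := (G.induce t).exists_isNClique_cliqueNum
  have hmap : G.IsClique ↑(s.map ⟨Subtype.val, Subtype.val_injective⟩) := by
    intro a ha b hb hab
    simp only [Finset.coe_map, Set.mem_image, Function.Embedding.coeFn_mk,
      Finset.mem_coe] at ha hb
    obtain ⟨⟨a', ha'⟩, has, rfl⟩ := ha
    obtain ⟨⟨b', hb'⟩, hbs, rfl⟩ := hb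
    have := hs.1 has hbs (by simpa using hab)
    exact this
  calc (G.induce t).cliqueNum = s.card := hs.2.symm
    _ = (s.map ⟨Subtype.val, Subtype.val_injective⟩).card := (Finset.card_map _).symm
    _ ≤ G.cliqueNum := hmap.card_le_cliqueNum

lemma colorable_succ_of_indep {V : Type} (G : SimpleGraph V) (s : Set V)
    (hs : G.IsIndependentSet s) {k : ℕ} (hc : (G.induce sᶜ).Colorable k) :
    G.Colorable (k + 1) := by
  classical
  obtain ⟨C⟩ := hc
  refine ⟨Coloring.mk
    (fun v => if h : v ∈ s then Fin.last k else (C ⟨v, h⟩).castSucc) ?_⟩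
  intro u v huv
  by_cases hu : u ∈ s <;> by_cases hv : v ∈ s <;> simp only [hu, hv, dif_pos, dif_neg,
    not_false_iff]
  · exact absurd huv (hs hu hv huv.ne)
  · exact fun h => (Fin.castSucc_lt_last _).ne' h
  · exact fun h => (Fin.castSucc_lt_last _).ne h
  · intro h
    exact C.valid (by simpa using huv) (Fin.castSucc_injective _ h)

/-- **Observation 5.** Let `n > 2`, let `R > 0` be such that every graph on at least `R`
vertices with clique number less than `n` contains an independent set of size `n`, and let `g`
be such that every graph on fewer than `R` vertices with clique number less than `n` has
chromatic number at most `g`.  Then every graph `G` with `ω(G) < n` and `|V(G)| ≥ R` satisfies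
`χ(G) ≤ ⌈(|V(G)| − R + 1)/n⌉ + g`. -/
theorem chromatic_le_ceilDiv_add (n R g : ℕ) (hn : 2 < n) (hR : 0 < R)
    (hRamsey : ∀ (V : Type) (inst : Fintype V) (G : SimpleGraph V),
      R ≤ @Fintype.card V inst → G.cliqueNum < n →
        ∃ s : Finset V, s.card = n ∧ G.IsIndependentSet ↑s)
    (hg : ∀ (V : Type) (inst : Fintype V) (G : SimpleGraph V),
      @Fintype.card V inst < R → G.cliqueNum < n → G.chromaticNumber ≤ (g : ℕ∞))
    (V : Type) [Fintype V] (G : SimpleGraph V)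
    (hω : G.cliqueNum < n) (hcard : R ≤ Fintype.card V) :
    G.chromaticNumber ≤ (((Fintype.card V - R + 1) ⌈/⌉ n + g : ℕ) : ℕ∞) := by
  classical
  have hn0 : 0 < n := by omega
  suffices H : ∀ m (V : Type) (inst : Fintype V) (G : SimpleGraph V),
      @Fintype.card V inst = m → G.cliqueNum < n → R ≤ @Fintype.card V inst →
      G.Colorable ((@Fintype.card V inst - R + 1) ⌈/⌉ n + g) by
    exact (H _ V _ G rfl hω hcard).chromaticNumber_le
  intro m
  induction m using Nat.strong_induction_on with
  | _ m IH =>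
    intro V inst G hm hω hcard
    obtain ⟨s, hsc, hsi⟩ := hRamsey V inst G hcard hω
    set t : Finset V := sᶜ with ht
    have htc : Fintype.card ↥(↑t : Set V) = Fintype.card V - n := by
      have : Fintype.card ↥(↑t : Set V) = t.card := Fintype.card_coe t
      rw [this, ht, Finset.card_compl, hsc]
    have hω' : (G.induce (↑t : Set V)).cliqueNum < n :=
      lt_of_le_of_lt (cliqueNum_induce_le G _) hω
    have hts : (↑t : Set V) = (↑s : Set V)ᶜ := by simp [ht]
    by_cases hcase : R ≤ Fintype.card V - n
    · have hlt : Fintype.card V - n < m := by omega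
      have hcol := IH _ hlt ↥(↑t : Set V) _ (G.induce (↑t : Set V)) htc hω'
        (le_trans hcase htc.ge)
      rw [htc] at hcol
      rw [hts] at hcol
      have h2 : G.Colorable ((Fintype.card V - n - R + 1) ⌈/⌉ n + g + 1) :=
        colorable_succ_of_indep G (↑s) hsi hcol
      have harith : (Fintype.card V - n - R + 1) ⌈/⌉ n + g + 1
          = (Fintype.card V - R + 1) ⌈/⌉ n + g := by
        have hc : Fintype.card V - R + 1 = (Fintype.card V - n - R + 1) + n := by omega
        rw [hc, Nat.ceilDiv_eq_add_pred_div, Nat.ceilDiv_eq_add_pred_div]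
        have he : Fintype.card V - n - R + 1 + n + n - 1
            = (Fintype.card V - n - R + 1 + n - 1) + n := by omega
        rw [he, Nat.add_div_right _ hn0]
        omega
      rwa [harith] at h2
    · push_neg at hcase
      have hχ := hg _ _ (G.induce (↑t : Set V)) (by rw [htc]; omega) hω'
      have hcol : (G.induce (↑t : Set V)).Colorable g :=
        SimpleGraph.chromaticNumber_le_iff_colorable.mp hχ
      rw [hts] at hcol
      have h2 : G.Colorable (g + 1) := colorable_succ_of_indep G (↑s) hsi hcol
      refine h2.mono ?_
      have h1 : 1 ≤ (Fintype.card V - R + 1) ⌈/⌉ n := by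
        rw [Nat.ceilDiv_eq_add_pred_div, Nat.one_le_div_iff hn0]
        omega
      omega
end

section
/- There exists a graph H on 11 vertices with the following three properties: (1) ω(H) < 5; (2) the vertex set V(H) can be partitioned into 3 cliques; (3) for every proper coloring c : V(H) → {1,…,6} of H with 6 colors, there exists a subset X ⊆ V(H) such that ω(H[X]) < 4 and c takes all 6 values {1,…,6} on X. -/
namespace L6

def myH : SimpleGraph (Fin 11) where
  Adj x y := x ≠ y ∧ ((y - x : Fin 11) ≤ 3 ∨ (x - y : Fin 11) ≤ 3)
  symm := ⟨fun _ _ h => ⟨h.1.symm, h.2.symm⟩⟩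
  loopless := ⟨fun _ h => h.1 rfl⟩

instance : DecidableRel myH.Adj := fun x y =>
  inferInstanceAs (Decidable (x ≠ y ∧ ((y - x : Fin 11) ≤ 3 ∨ (x - y : Fin 11) ≤ 3)))

def cand : Fin 8 → List (Fin 11)
  | 0 => [0, 2, 5, 8] | 1 => [0, 4, 7] | 2 => [1, 4, 7, 10] | 3 => [2, 6, 9]
  | 4 => [1, 5, 9] | 5 => [1, 4, 8] | 6 => [3, 6, 10] | 7 => [1, 3, 6, 9]

set_option maxHeartbeats 4000000 in
lemma no5 : ∀ a b : Fin 11, myH.Adj a b → ∀ c, myH.Adj a c → myH.Adj b c →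
    ∀ d, myH.Adj a d → myH.Adj b d → myH.Adj c d →
    ∀ e, myH.Adj a e → myH.Adj b e → myH.Adj c e → myH.Adj d e → False := by decide

set_option maxHeartbeats 4000000 in
lemma win4 : ∀ x y : Fin 11, myH.Adj x y → ∀ z, myH.Adj x z → myH.Adj y z →
    ∀ w, myH.Adj x w → myH.Adj y w → myH.Adj z w →
    ∃ t : Fin 11, (t = x ∨ t = y ∨ t = z ∨ t = w) ∧ (t+1 = x ∨ t+1 = y ∨ t+1 = z ∨ t+1 = w)
      ∧ (t+2 = x ∨ t+2 = y ∨ t+2 = z ∨ t+2 = w)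
      ∧ (t+3 = x ∨ t+3 = y ∨ t+3 = z ∨ t+3 = w) := by decide

lemma hit : ∀ (r : Fin 8) (t : Fin 11),
    t ∈ cand r ∨ t+1 ∈ cand r ∨ t+2 ∈ cand r ∨ t+3 ∈ cand r := by decide

lemma indep3 : ∀ x y z : Fin 11, ¬myH.Adj x y → ¬myH.Adj x z → ¬myH.Adj y z →
    x = y ∨ x = z ∨ y = z := by decide

lemma classify : ∀ x y : Fin 11, ¬myH.Adj x y → x ≠ y →
    y = x + 4 ∨ x = y + 4 ∨ y = x + 5 ∨ x = y + 5 := by decide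

lemma ar1 : ∀ v : Fin 11, v+4+4 = v+8 := by decide
lemma ar2 : ∀ v : Fin 11, v+7+4 = v := by decide
lemma ar3 : ∀ v : Fin 11, v+4+1 = v+5 := by decide
lemma ar4 : ∀ v : Fin 11, v+5+2 = v+7 := by decide
lemma ar5 : ∀ v : Fin 11, v+5+4 = v+9 := by decide
lemma ar6 : ∀ v : Fin 11, v+9+2 = v := by decide
lemma ar7 : ∀ v : Fin 11, v+5+7 = v+1 := by decide
lemma ar8 : ∀ v : Fin 11, v+1+4 = v+5 := by decide
lemma ne4 : ∀ v : Fin 11, v+4 ≠ v := by decide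
lemma ne8 : ∀ v : Fin 11, v+8 ≠ v := by decide
lemma ne84 : ∀ v : Fin 11, v+8 ≠ v+4 := by decide
lemma ne7 : ∀ v : Fin 11, v+7 ≠ v := by decide
lemma ne74 : ∀ v : Fin 11, v+7 ≠ v+4 := by decide
lemma adj1 : ∀ w : Fin 11, myH.Adj w (w+1) := by decide
lemma adj2 : ∀ w : Fin 11, myH.Adj w (w+2) := by decide

def pfun : Fin 11 → Fin 3 := fun v => if v.val ≤ 3 then 0 else if v.val ≤ 7 then 1 else 2

lemma paux : ∀ x y : Fin 11, pfun x = pfun y → x ≠ y → myH.Adj x y := by decide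

def coreGoal (s : Fin 11) (D : Fin 11 → Bool) : Prop :=
  (∀ v, D v = true → D (v+4) = false ∧ D (v+7) = false) →
  D s = false → D (s+7) = false →
  ∃ r : Fin 8, s ∉ cand r ∧
    (∀ v ∈ cand r, v + 4 ∈ cand r → D v = false) ∧
    (∀ v ∈ cand r, v + 5 ∈ cand r →
      ¬((v ≠ s ∧ D v = false ∧ D (v+7) = false) ∧
        (v+5 ≠ s ∧ D (v+5) = false ∧ D (v+5+7) = false)))

set_option synthInstance.maxSize 1000000 in
set_option synthInstance.maxHeartbeats 400000 in
noncomputable instance (s : Fin 11) (D : Fin 11 → Bool) : Decidable (coreGoal s D) := by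
  unfold coreGoal; infer_instance

set_option maxHeartbeats 8000000 in
set_option maxRecDepth 10000 in
lemma core : ∀ (s : Fin 11) (b0 b1 b2 b3 b4 b5 b6 b7 b8 b9 b10 : Bool),
    coreGoal s ![b0,b1,b2,b3,b4,b5,b6,b7,b8,b9,b10] := by
  decide

lemma core' (s : Fin 11) (D : Fin 11 → Bool) : coreGoal s D := by
  have hD : D = ![D 0, D 1, D 2, D 3, D 4, D 5, D 6, D 7, D 8, D 9, D 10] := by
    funext v; fin_cases v <;> rfl
  rw [hD]
  exact core s _ _ _ _ _ _ _ _ _ _ _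

lemma ext3 {α : Type*} [DecidableEq α] {s : Finset α} (h : s.card = 3) :
    ∃ a b c, a ∈ s ∧ b ∈ s ∧ c ∈ s ∧ a ≠ b ∧ a ≠ c ∧ b ≠ c := by
  rw [Finset.card_eq_three] at h
  obtain ⟨a, b, c, hab, hac, hbc, hs⟩ := h
  exact ⟨a, b, c, by simp [hs], by simp [hs], by simp [hs], hab, hac, hbc⟩

lemma ext4 {α : Type*} [DecidableEq α] {s : Finset α} (h : s.card = 4) :
    ∃ a b c d, a ∈ s ∧ b ∈ s ∧ c ∈ s ∧ d ∈ s ∧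
      a ≠ b ∧ a ≠ c ∧ a ≠ d ∧ b ≠ c ∧ b ≠ d ∧ c ≠ d := by
  rw [show (4:ℕ) = 3+1 from rfl, Finset.card_eq_succ] at h
  obtain ⟨a, t, hat, rfl, ht⟩ := h
  obtain ⟨b, c, d, hb, hc, hd, hbc, hbd, hcd⟩ := ext3 ht
  exact ⟨a, b, c, d, Finset.mem_insert_self _ _, Finset.mem_insert_of_mem hb,
    Finset.mem_insert_of_mem hc, Finset.mem_insert_of_mem hd,
    fun h => hat (h ▸ hb), fun h => hat (h ▸ hc), fun h => hat (h ▸ hd), hbc, hbd, hcd⟩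

lemma ext5 {α : Type*} [DecidableEq α] {s : Finset α} (h : s.card = 5) :
    ∃ a b c d e, a ∈ s ∧ b ∈ s ∧ c ∈ s ∧ d ∈ s ∧ e ∈ s ∧
      a ≠ b ∧ a ≠ c ∧ a ≠ d ∧ a ≠ e ∧ b ≠ c ∧ b ≠ d ∧ b ≠ e ∧ c ≠ d ∧ c ≠ e ∧ d ≠ e := by
  rw [show (5:ℕ) = 4+1 from rfl, Finset.card_eq_succ] at h
  obtain ⟨a, t, hat, rfl, ht⟩ := h
  obtain ⟨b, c, d, e, hb, hc, hd, he, hbc, hbd, hbe, hcd, hce, hde⟩ := ext4 ht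
  exact ⟨a, b, c, d, e, Finset.mem_insert_self _ _, Finset.mem_insert_of_mem hb,
    Finset.mem_insert_of_mem hc, Finset.mem_insert_of_mem hd, Finset.mem_insert_of_mem he,
    fun h => hat (h ▸ hb), fun h => hat (h ▸ hc), fun h => hat (h ▸ hd), fun h => hat (h ▸ he),
    hbc, hbd, hbe, hcd, hce, hde⟩

end L6
/-- **Lemma 6.** There exists a graph `H` on `11` vertices such that
(1) `ω(H) < 5`;
(2) `V(H)` can be partitioned into `3` cliques;
(3) for every proper `6`-coloring `c` of `H` there exists `X ⊆ V(H)` with `ω(H[X]) < 4`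
    on which `c` takes all `6` colors. -/
theorem exists_good_graph_on_11_vertices :
    ∃ (V : Type) (inst : Fintype V) (H : SimpleGraph V),
      @Fintype.card V inst = 11 ∧
      H.cliqueNum < 5 ∧
      (∃ p : V → Fin 3, ∀ i, H.IsClique (p ⁻¹' {i})) ∧
      (∀ c : H.Coloring (Fin 6), ∃ X : Set V,
        (H.induce X).cliqueNum < 4 ∧ ∀ i : Fin 6, ∃ x ∈ X, c x = i) := by
  classical
  refine ⟨Fin 11, inferInstance, L6.myH, by simp, ?_, ?_, ?_⟩
  · -- cliqueNum < 5
    by_contra hlt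
    push_neg at hlt
    obtain ⟨t, ht⟩ := L6.myH.exists_isNClique_cliqueNum
    obtain ⟨u, hut, hu⟩ := Finset.exists_subset_card_eq
      (show 5 ≤ t.card by rw [ht.card_eq]; exact hlt)
    obtain ⟨a, b, c, d, e, ha, hb, hc, hd, he,
      hab, hac, had, hae, hbc, hbd, hbe, hcd, hce, hde⟩ := L6.ext5 hu
    have hcl : ∀ x ∈ u, ∀ y ∈ u, x ≠ y → L6.myH.Adj x y := fun x hx y hy hxy =>
      (ht.isClique.subset (Finset.coe_subset.mpr hut))
        (Finset.mem_coe.mpr hx) (Finset.mem_coe.mpr hy) hxy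
    exact L6.no5 a b (hcl a ha b hb hab) c (hcl a ha c hc hac) (hcl b hb c hc hbc)
      d (hcl a ha d hd had) (hcl b hb d hd hbd) (hcl c hc d hd hcd)
      e (hcl a ha e he hae) (hcl b hb e he hbe) (hcl c hc e he hce) (hcl d hd e he hde)
  · -- partition into 3 cliques
    refine ⟨L6.pfun, fun i x hx y hy hxy => ?_⟩
    simp only [Set.mem_preimage, Set.mem_singleton_iff] at hx hy
    exact L6.paux x y (hx.trans hy.symm) hxy
  · -- main part
    intro c
    have hvalid : ∀ {a b : Fin 11}, L6.myH.Adj a b → c a ≠ c b := fun h => c.valid h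
    have noThree : ∀ x y z : Fin 11, x ≠ y → x ≠ z → y ≠ z →
        c x = c y → c x = c z → False := by
      intro x y z hxy hxz hyz h1 h2
      rcases L6.indep3 x y z (fun h => hvalid h h1) (fun h => hvalid h h2)
        (fun h => hvalid h (h1.symm.trans h2)) with h|h|h
      exacts [hxy h, hxz h, hyz h]
    set f : Fin 6 → ℕ := fun i => (Finset.univ.filter fun v => c v = i).card with hf
    have fibcard : ∀ i, f i ≤ 2 := by
      intro i; by_contra h; push_neg at h
      obtain ⟨u, hu_sub, hu3⟩ := Finset.exists_subset_card_eq
        (show 3 ≤ (Finset.univ.filter fun v => c v = i).card from h)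
      obtain ⟨x, y, z, hx, hy, hz, hxy, hxz, hyz⟩ := L6.ext3 hu3
      have cx := (Finset.mem_filter.mp (hu_sub hx)).2
      have cy := (Finset.mem_filter.mp (hu_sub hy)).2
      have cz := (Finset.mem_filter.mp (hu_sub hz)).2
      exact noThree x y z hxy hxz hyz (cx.trans cy.symm) (cx.trans cz.symm)
    have hsum : ∑ i : Fin 6, f i = 11 := by
      have := Finset.card_eq_sum_card_fiberwise
        (f := fun v => c v) (s := Finset.univ) (t := Finset.univ)
        (fun x _ => Finset.mem_univ _)
      simp only [hf]
      simpa using this.symm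
    have hne : ∀ i, ∃ x, c x = i := by
      intro i; by_contra h; push_neg at h
      have h0 : f i = 0 := by
        simp only [hf, Finset.card_eq_zero]
        exact Finset.filter_eq_empty_iff.mpr (fun x _ => h x)
      have hb : ∑ j ∈ Finset.univ.erase i, f j ≤ 10 := by
        calc ∑ j ∈ Finset.univ.erase i, f j ≤ (Finset.univ.erase i).card • 2 :=
              Finset.sum_le_card_nsmul _ _ _ (fun j _ => fibcard j)
          _ = 10 := by rw [Finset.card_erase_of_mem (Finset.mem_univ i)]; simp
      have hadd := Finset.add_sum_erase Finset.univ f (Finset.mem_univ i)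
      omega
    have onesmall : ∀ i j, f i = 1 → f j = 1 → i = j := by
      intro i j hi hj; by_contra hij
      have hji : j ∈ Finset.univ.erase i :=
        Finset.mem_erase.mpr ⟨Ne.symm hij, Finset.mem_univ _⟩
      have e1 := Finset.add_sum_erase Finset.univ f (Finset.mem_univ i)
      have e2 := Finset.add_sum_erase (Finset.univ.erase i) f hji
      have hb : ∑ k ∈ (Finset.univ.erase i).erase j, f k ≤ 8 := by
        calc ∑ k ∈ (Finset.univ.erase i).erase j, f k
            ≤ ((Finset.univ.erase i).erase j).card • 2 :=
              Finset.sum_le_card_nsmul _ _ _ (fun k _ => fibcard k)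
          _ = 8 := by
              rw [Finset.card_erase_of_mem hji,
                Finset.card_erase_of_mem (Finset.mem_univ i)]; simp
      omega
    have hex1 : ∃ i0, f i0 = 1 := by
      by_contra h; push_neg at h
      have h2 : ∀ i, f i = 2 := by
        intro i
        have h1 : 1 ≤ f i := by
          obtain ⟨x, hx⟩ := hne i
          exact Finset.card_pos.mpr
            ⟨x, Finset.mem_filter.mpr ⟨Finset.mem_univ _, hx⟩⟩
        have := fibcard i; have := h i; omega
      rw [Finset.sum_congr rfl (fun i _ => h2 i)] at hsum
      simp at hsum
    obtain ⟨i0, hi0⟩ := hex1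
    obtain ⟨s0, hs0⟩ := Finset.card_eq_one.mp hi0
    have hcs0 : c s0 = i0 := by
      have hm : s0 ∈ Finset.univ.filter (fun v => c v = i0) := by
        rw [hs0]; exact Finset.mem_singleton_self s0
      exact (Finset.mem_filter.mp hm).2
    have huniq : ∀ v, c v = c s0 → v = s0 := by
      intro v hv
      have hv' : v ∈ Finset.univ.filter (fun v => c v = i0) :=
        Finset.mem_filter.mpr ⟨Finset.mem_univ _, hv.trans hcs0⟩
      rw [hs0] at hv'; exact Finset.mem_singleton.mp hv'
    set D : Fin 11 → Bool := fun v => decide (c v = c (v+4)) with hD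
    have hDt : ∀ v, D v = true ↔ c v = c (v+4) := fun v => by simp [hD]
    have hDf : ∀ v, D v = false ↔ ¬(c v = c (v+4)) := fun v => by simp [hD]
    have hc1 : ∀ v, D v = true → D (v+4) = false ∧ D (v+7) = false := by
      intro v hv
      have h1 : c v = c (v+4) := (hDt v).mp hv
      constructor
      · rw [hDf]; intro h2; rw [L6.ar1 v] at h2
        exact noThree v (v+4) (v+8) (Ne.symm (L6.ne4 v)) (Ne.symm (L6.ne8 v))
          (Ne.symm (L6.ne84 v)) h1 (h1.trans h2)
      · rw [hDf]; intro h2; rw [L6.ar2 v] at h2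
        exact noThree v (v+4) (v+7) (Ne.symm (L6.ne4 v)) (Ne.symm (L6.ne7 v))
          (Ne.symm (L6.ne74 v)) h1 h2.symm
    have hc2 : D s0 = false := by
      rw [hDf]; intro h
      exact L6.ne4 s0 (huniq (s0+4) h.symm)
    have hc3 : D (s0+7) = false := by
      rw [hDf]; intro h
      rw [L6.ar2 s0] at h
      exact L6.ne7 s0 (huniq (s0+7) h)
    obtain ⟨r, hrs, hr4, hr5⟩ := L6.core' s0 D hc1 hc2 hc3
    refine ⟨{v | v ∉ L6.cand r}, ?_, ?_⟩
    · -- induced graph has no 4-clique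
      haveI : Fintype ↥({v | v ∉ L6.cand r} : Set (Fin 11)) := Fintype.ofFinite _
      by_contra h4; push_neg at h4
      obtain ⟨t, ht⟩ := (L6.myH.induce {v | v ∉ L6.cand r}).exists_isNClique_cliqueNum
      obtain ⟨u, hut, hu⟩ := Finset.exists_subset_card_eq
        (show 4 ≤ t.card by rw [ht.card_eq]; exact h4)
      obtain ⟨a, b, c', d, ha, hb, hc', hd, hab, hac, had, hbc, hbd, hcd⟩ := L6.ext4 hu
      have hcl : ∀ x ∈ u, ∀ y ∈ u, x ≠ y → L6.myH.Adj ↑x ↑y := fun x hx y hy hxy =>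
        (ht.isClique.subset (Finset.coe_subset.mpr hut))
          (Finset.mem_coe.mpr hx) (Finset.mem_coe.mpr hy) hxy
      obtain ⟨t0, h0, h1, h2, h3⟩ := L6.win4 ↑a ↑b (hcl a ha b hb hab)
        ↑c' (hcl a ha c' hc' hac) (hcl b hb c' hc' hbc)
        ↑d (hcl a ha d hd had) (hcl b hb d hd hbd) (hcl c' hc' d hd hcd)
      have done : ∀ w : Fin 11, w ∈ L6.cand r →
          (w = ↑a ∨ w = ↑b ∨ w = ↑c' ∨ w = ↑d) → False := by
        intro w hw hcase
        rcases hcase with h|h|h|h <;> rw [h] at hw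
        exacts [a.2 hw, b.2 hw, c'.2 hw, d.2 hw]
      rcases L6.hit r t0 with hm|hm|hm|hm
      exacts [done t0 hm h0, done (t0+1) hm h1, done (t0+2) hm h2, done (t0+3) hm h3]
    · -- all six colors appear outside cand r
      intro i
      obtain ⟨x, hx⟩ := hne i
      by_cases hxr : x ∈ L6.cand r
      · by_cases hx2 : ∃ y, y ≠ x ∧ c y = i
        · obtain ⟨y, hyx, hy⟩ := hx2
          by_cases hyr : y ∈ L6.cand r
          · exfalso
            have case5 : ∀ u v : Fin 11, u ∈ L6.cand r → v ∈ L6.cand r → u ≠ v →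
                c u = i → c v = i → v = u + 5 → False := by
              intro u v hu hv huv hcu hcv hvu
              have hcuv : c u = c v := hcu.trans hcv.symm
              refine hr5 u hu (hvu ▸ hv) ⟨⟨?_, ?_, ?_⟩, ?_, ?_, ?_⟩
              · intro h; subst h
                exact huv (huniq v hcuv.symm).symm
              · rw [hDf]; intro h
                have h45 : c (u+4) = c (u+5) := by rw [← h, hcuv, hvu]
                exact hvalid (L6.ar3 u ▸ L6.adj1 (u+4)) h45
              · rw [hDf]; intro h
                rw [L6.ar2 u] at h
                have h57 : c (u+5) = c (u+7) := by rw [h, hcuv, hvu]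
                exact hvalid (L6.ar4 u ▸ L6.adj2 (u+5)) h57
              · intro h
                have hv0 : v = s0 := hvu.trans h
                have hu0 : u = s0 := huniq u (by rw [hcuv, hv0])
                exact huv (hu0.trans hv0.symm)
              · rw [hDf]; intro h
                rw [L6.ar5 u] at h
                have h9 : c (u+9) = c u := by rw [← h, ← hvu]; exact hcuv.symm
                have hadj9 : L6.myH.Adj (u+9) u := by
                  have h' := L6.adj2 (u+9); rwa [L6.ar6 u] at h'
                exact hvalid hadj9 h9
              · rw [L6.ar7 u, hDf]; intro h
                rw [L6.ar8 u] at h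
                have h1' : c u = c (u+1) := by rw [h, ← hvu]; exact hcuv
                exact hvalid (L6.adj1 u) h1'
            have hnadj : ¬ L6.myH.Adj x y := fun h => hvalid h (hx.trans hy.symm)
            rcases L6.classify x y hnadj (Ne.symm hyx) with h|h|h|h
            · have hDx : D x = true := (hDt x).mpr (by rw [← h, hx, hy])
              rw [hr4 x hxr (h ▸ hyr)] at hDx
              exact Bool.false_ne_true hDx
            · have hDy : D y = true := (hDt y).mpr (by rw [← h, hx, hy])
              rw [hr4 y hyr (h ▸ hxr)] at hDy
              exact Bool.false_ne_true hDy
            · exact case5 x y hxr hyr (Ne.symm hyx) hx hy h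
            · exact case5 y x hyr hxr hyx hy hx h
          · exact ⟨y, hyr, hy⟩
        · push_neg at hx2
          have hfi : f i = 1 := by
            simp only [hf, Finset.card_eq_one]
            refine ⟨x, Finset.eq_singleton_iff_unique_mem.mpr
              ⟨Finset.mem_filter.mpr ⟨Finset.mem_univ _, hx⟩, fun y hy => ?_⟩⟩
            by_contra hyx
            exact hx2 y hyx (Finset.mem_filter.mp hy).2
          have hii0 : i = i0 := onesmall i i0 hfi hi0
          have hxs : x = s0 := by
            have hxmem : x ∈ Finset.univ.filter (fun v => c v = i0) :=
              Finset.mem_filter.mpr ⟨Finset.mem_univ _, by rw [hx, hii0]⟩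
            rw [hs0] at hxmem; exact Finset.mem_singleton.mp hxmem
          exact ⟨x, show x ∉ L6.cand r from hxs ▸ hrs, hx⟩
      · exact ⟨x, hxr, hx⟩
end

section
/- Let H be the graph on 11 vertices obtained as follows: take two disjoint 5-cycles C₁ and C₂, add all edges between V(C₁) and V(C₂), fix vertices x₁ ∈ V(C₁) and x₂ ∈ V(C₂), and add a new vertex v adjacent exactly to x₁ and x₂. Then for every proper coloring c : V(H) → {1,…,6} of H, there exists a subset X ⊆ V(H) with ω(H[X]) < 4 such that c takes all 6 values {1,…,6} on X. -/
/-- The graph `H` from the paper: two disjoint `5`-cycles `C₁, C₂` joined completely, together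
with one extra vertex (`none`) adjacent exactly to `x₁ ∈ V(C₁)` and `x₂ ∈ V(C₂)`.  The vertex
`some (Sum.inl a)` is the vertex `a` of `C₁`, and `some (Sum.inr a)` is the vertex `a` of
`C₂`. -/
def graphH (x₁ x₂ : Fin 5) : SimpleGraph (Option (Fin 5 ⊕ Fin 5)) :=
  SimpleGraph.fromRel (fun a b =>
    match a, b with
    | some (Sum.inl x), some (Sum.inl y) => (SimpleGraph.cycleGraph 5).Adj x y
    | some (Sum.inr x), some (Sum.inr y) => (SimpleGraph.cycleGraph 5).Adj x y
    | some (Sum.inl _), some (Sum.inr _) => True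
    | none, some (Sum.inl x) => x = x₁
    | none, some (Sum.inr x) => x = x₂
    | _, _ => False)

namespace HAux

abbrev cyc : SimpleGraph (Fin 5) := SimpleGraph.cycleGraph 5
abbrev L (a : Fin 5) : Option (Fin 5 ⊕ Fin 5) := some (Sum.inl a)
abbrev R (a : Fin 5) : Option (Fin 5 ⊕ Fin 5) := some (Sum.inr a)

variable {x₁ x₂ : Fin 5}

lemma adj_LR (a b : Fin 5) : (graphH x₁ x₂).Adj (L a) (R b) := by
  simp [graphH, SimpleGraph.fromRel_adj]

lemma adj_LL {a b : Fin 5} : (graphH x₁ x₂).Adj (L a) (L b) ↔ cyc.Adj a b := by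
  simp only [graphH, SimpleGraph.fromRel_adj]
  constructor
  · rintro ⟨-, h | h⟩
    · exact h
    · exact h.symm
  · exact fun h => ⟨by simpa using h.ne, Or.inl h⟩

lemma adj_RR {a b : Fin 5} : (graphH x₁ x₂).Adj (R a) (R b) ↔ cyc.Adj a b := by
  simp only [graphH, SimpleGraph.fromRel_adj]
  constructor
  · rintro ⟨-, h | h⟩
    · exact h
    · exact h.symm
  · exact fun h => ⟨by simpa using h.ne, Or.inl h⟩

lemma adj_none_L {a : Fin 5} : (graphH x₁ x₂).Adj none (L a) ↔ a = x₁ := by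
  simp [graphH, SimpleGraph.fromRel_adj]

lemma adj_none_R {a : Fin 5} : (graphH x₁ x₂).Adj none (R a) ↔ a = x₂ := by
  simp [graphH, SimpleGraph.fromRel_adj]

lemma cyc_triangle_free : ∀ a b c : Fin 5, cyc.Adj a b → cyc.Adj a c → cyc.Adj b c → False := by
  decide

def pairOK (a b t : Fin 6) : Bool := a != t && b != t && a != b

def chkPair (v0 v1 v2 v3 v4 t : Fin 6) : Bool :=
  pairOK v0 v2 t || pairOK v0 v3 t || pairOK v1 v3 t || pairOK v1 v4 t || pairOK v2 v4 t

def cycOK (v0 v1 v2 v3 v4 : Fin 6) : Bool :=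
  v0 != v1 && v1 != v2 && v2 != v3 && v3 != v4 && v4 != v0

def chkAll (v0 v1 v2 v3 v4 : Fin 6) : Bool :=
  !(cycOK v0 v1 v2 v3 v4) ||
    (chkPair v0 v1 v2 v3 v4 v0 && chkPair v0 v1 v2 v3 v4 v1 && chkPair v0 v1 v2 v3 v4 v2 &&
     chkPair v0 v1 v2 v3 v4 v3 && chkPair v0 v1 v2 v3 v4 v4)

def triOK (a b c : Fin 6) : Bool := a != b && a != c && b != c

def chkThree (v0 v1 v2 v3 v4 : Fin 6) : Bool :=
  !(cycOK v0 v1 v2 v3 v4) ||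
    (triOK v0 v1 v2 || triOK v0 v1 v3 || triOK v1 v2 v3 || triOK v2 v3 v4)

set_option maxRecDepth 10000 in
lemma chkAll_true : ∀ v0 v1 v2 v3 v4 : Fin 6, chkAll v0 v1 v2 v3 v4 = true := by decide

set_option maxRecDepth 10000 in
lemma chkThree_true : ∀ v0 v1 v2 v3 v4 : Fin 6, chkThree v0 v1 v2 v3 v4 = true := by decide

lemma cycOK_true (f : Fin 5 → Fin 6) (hf : ∀ a b, cyc.Adj a b → f a ≠ f b) :
    cycOK (f 0) (f 1) (f 2) (f 3) (f 4) = true := by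
  simp only [cycOK, Bool.and_eq_true, bne_iff_ne, ne_eq]
  exact ⟨⟨⟨⟨hf 0 1 (by decide), hf 1 2 (by decide)⟩, hf 2 3 (by decide)⟩,
    hf 3 4 (by decide)⟩, hf 4 0 (by decide)⟩

lemma pair_extract {f : Fin 5 → Fin 6} {t : Fin 6}
    (h : chkPair (f 0) (f 1) (f 2) (f 3) (f 4) t = true) :
    ∃ i j, ¬cyc.Adj i j ∧ i ≠ j ∧ f i ≠ t ∧ f j ≠ t ∧ f i ≠ f j := by
  simp only [chkPair, pairOK, Bool.or_eq_true, Bool.and_eq_true, bne_iff_ne, ne_eq] at h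
  rcases h with ((((⟨⟨h1, h2⟩, h3⟩ | ⟨⟨h1, h2⟩, h3⟩) | ⟨⟨h1, h2⟩, h3⟩) | ⟨⟨h1, h2⟩, h3⟩) |
    ⟨⟨h1, h2⟩, h3⟩)
  · exact ⟨0, 2, by decide, by decide, h1, h2, h3⟩
  · exact ⟨0, 3, by decide, by decide, h1, h2, h3⟩
  · exact ⟨1, 3, by decide, by decide, h1, h2, h3⟩
  · exact ⟨1, 4, by decide, by decide, h1, h2, h3⟩
  · exact ⟨2, 4, by decide, by decide, h1, h2, h3⟩

lemma cyc_pair (f : Fin 5 → Fin 6) (hf : ∀ a b, cyc.Adj a b → f a ≠ f b) (t : Fin 6)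
    (ht : ∃ k, f k = t) :
    ∃ i j, ¬cyc.Adj i j ∧ i ≠ j ∧ f i ≠ t ∧ f j ≠ t ∧ f i ≠ f j := by
  obtain ⟨k, rfl⟩ := ht
  have h := chkAll_true (f 0) (f 1) (f 2) (f 3) (f 4)
  rw [chkAll, cycOK_true f hf] at h
  simp only [Bool.not_true, Bool.false_or, Bool.and_eq_true] at h
  obtain ⟨⟨⟨⟨h0, h1⟩, h2⟩, h3⟩, h4⟩ := h
  fin_cases k
  · exact pair_extract h0
  · exact pair_extract h1
  · exact pair_extract h2
  · exact pair_extract h3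
  · exact pair_extract h4

lemma cyc_three_colors (f : Fin 5 → Fin 6) (hf : ∀ a b, cyc.Adj a b → f a ≠ f b) :
    ∃ p q r : Fin 5, f p ≠ f q ∧ f p ≠ f r ∧ f q ≠ f r := by
  have h := chkThree_true (f 0) (f 1) (f 2) (f 3) (f 4)
  rw [chkThree, cycOK_true f hf] at h
  simp only [Bool.not_true, Bool.false_or, triOK, Bool.or_eq_true, Bool.and_eq_true,
    bne_iff_ne, ne_eq] at h
  rcases h with ((⟨⟨h1, h2⟩, h3⟩ | ⟨⟨h1, h2⟩, h3⟩) | ⟨⟨h1, h2⟩, h3⟩) | ⟨⟨h1, h2⟩, h3⟩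
  · exact ⟨0, 1, 2, h1, h2, h3⟩
  · exact ⟨0, 1, 3, h1, h2, h3⟩
  · exact ⟨1, 2, 3, h1, h2, h3⟩
  · exact ⟨2, 3, 4, h1, h2, h3⟩

/-- The candidate set: `none`, two vertices of the left cycle, and the whole right cycle. -/
def XL (i j : Fin 5) : Set (Option (Fin 5 ⊕ Fin 5)) :=
  {o | o = none ∨ o = L i ∨ o = L j ∨ ∃ a, o = R a}

/-- The candidate set: `none`, two vertices of the right cycle, and the whole left cycle. -/
def XR (i j : Fin 5) : Set (Option (Fin 5 ⊕ Fin 5)) :=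
  {o | o = none ∨ o = R i ∨ o = R j ∨ ∃ a, o = L a}

lemma cliqueNum_lt_of_cliqueFree {V : Type*} [Fintype V] (G : SimpleGraph V)
    (h : G.CliqueFree 4) : G.cliqueNum < 4 := by
  by_contra h'
  push_neg at h'
  obtain ⟨s, hs⟩ := G.exists_isNClique_cliqueNum
  exact (h.mono h') s hs

lemma cliqueFree_XL (x₁ x₂ i j : Fin 5) (hij : ¬cyc.Adj i j) :
    ((graphH x₁ x₂).induce (XL i j)).CliqueFree 4 := by
  intro s hs
  classical
  set T : Finset (Option (Fin 5 ⊕ Fin 5)) := s.map (Function.Embedding.subtype _) with hT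
  have hTcard : T.card = 4 := by rw [hT, Finset.card_map]; exact hs.2
  have hTmem : ∀ o ∈ T, o ∈ XL i j := by
    intro o ho
    rw [hT, Finset.mem_map] at ho
    obtain ⟨⟨o', ho'⟩, -, rfl⟩ := ho
    exact ho'
  have hadj : ∀ o₁ ∈ T, ∀ o₂ ∈ T, o₁ ≠ o₂ → (graphH x₁ x₂).Adj o₁ o₂ := by
    intro o₁ h₁ o₂ h₂ hne
    rw [hT, Finset.mem_map] at h₁ h₂
    obtain ⟨u₁, hu₁, rfl⟩ := h₁
    obtain ⟨u₂, hu₂, rfl⟩ := h₂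
    exact hs.1 hu₁ hu₂ (fun h => hne (congrArg _ h))
  by_cases hn : (none : Option (Fin 5 ⊕ Fin 5)) ∈ T
  · have hsub : T ⊆ {none, L x₁, R x₂} := by
      intro o ho
      by_cases hon : o = none
      · simp [hon]
      · have hadjo := hadj none hn o ho (fun h => hon h.symm)
        match o with
        | none => exact absurd rfl hon
        | some (Sum.inl a) =>
          have := adj_none_L.mp hadjo
          simp [this]
        | some (Sum.inr a) =>
          have := adj_none_R.mp hadjo
          simp [this]
    have := Finset.card_le_card hsub
    rw [hTcard] at this
    have h3 : ({none, L x₁, R x₂} : Finset (Option (Fin 5 ⊕ Fin 5))).card ≤ 3 := by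
      apply le_trans (Finset.card_insert_le _ _)
      apply Nat.succ_le_succ
      apply le_trans (Finset.card_insert_le _ _)
      simp
    omega
  · set TR := T.filter (fun o => ∃ a, o = R a) with hTRdef
    set TL := T.filter (fun o => ¬∃ a, o = R a) with hTLdef
    have hsplit : TR.card + TL.card = 4 := by
      rw [hTRdef, hTLdef, Finset.card_filter_add_card_filter_not, hTcard]
    have hTLle : TL.card ≤ 1 := by
      rw [Finset.card_le_one]
      intro a ha b hb
      rw [hTLdef, Finset.mem_filter] at ha hb
      obtain ⟨haT, haR⟩ := ha
      obtain ⟨hbT, hbR⟩ := hb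
      have haX := hTmem a haT
      have hbX := hTmem b hbT
      have ha' : a = L i ∨ a = L j := by
        rcases haX with h | h | h | h
        · exact absurd (h ▸ haT) hn
        · exact Or.inl h
        · exact Or.inr h
        · exact absurd h haR
      have hb' : b = L i ∨ b = L j := by
        rcases hbX with h | h | h | h
        · exact absurd (h ▸ hbT) hn
        · exact Or.inl h
        · exact Or.inr h
        · exact absurd h hbR
      by_contra hne
      have hadjab := hadj a haT b hbT hne
      rcases ha' with rfl | rfl <;> rcases hb' with rfl | rfl
      · exact hne rfl
      · exact hij (adj_LL.mp hadjab)
      · exact hij ((adj_LL.mp hadjab).symm)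
      · exact hne rfl
    have hTRle : TR.card ≤ 2 := by
      by_contra hc
      push_neg at hc
      obtain ⟨u, husub, hucard⟩ := Finset.exists_subset_card_eq hc
      rw [Finset.card_eq_three] at hucard
      obtain ⟨a, b, d, hab, had, hbd, rfl⟩ := hucard
      have hmem : ∀ o ∈ ({a, b, d} : Finset (Option (Fin 5 ⊕ Fin 5))), ∃ z, o = R z := by
        intro o ho
        have := husub ho
        rw [hTRdef, Finset.mem_filter] at this
        exact this.2
      obtain ⟨za, hza⟩ := hmem a (by simp)
      obtain ⟨zb, hzb⟩ := hmem b (by simp)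
      obtain ⟨zd, hzd⟩ := hmem d (by simp)
      have hT' : ∀ o ∈ ({a, b, d} : Finset (Option (Fin 5 ⊕ Fin 5))), o ∈ T := by
        intro o ho
        have := husub ho
        rw [hTRdef, Finset.mem_filter] at this
        exact this.1
      have h1 : (graphH x₁ x₂).Adj a b := hadj a (hT' a (by simp)) b (hT' b (by simp)) hab
      have h2 : (graphH x₁ x₂).Adj a d := hadj a (hT' a (by simp)) d (hT' d (by simp)) had
      have h3 : (graphH x₁ x₂).Adj b d := hadj b (hT' b (by simp)) d (hT' d (by simp)) hbd
      rw [hza, hzb] at h1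
      rw [hza, hzd] at h2
      rw [hzb, hzd] at h3
      exact cyc_triangle_free za zb zd (adj_RR.mp h1) (adj_RR.mp h2) (adj_RR.mp h3)
    omega

lemma cliqueFree_XR (x₁ x₂ i j : Fin 5) (hij : ¬cyc.Adj i j) :
    ((graphH x₁ x₂).induce (XR i j)).CliqueFree 4 := by
  intro s hs
  classical
  set T : Finset (Option (Fin 5 ⊕ Fin 5)) := s.map (Function.Embedding.subtype _) with hT
  have hTcard : T.card = 4 := by rw [hT, Finset.card_map]; exact hs.2
  have hTmem : ∀ o ∈ T, o ∈ XR i j := by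
    intro o ho
    rw [hT, Finset.mem_map] at ho
    obtain ⟨⟨o', ho'⟩, -, rfl⟩ := ho
    exact ho'
  have hadj : ∀ o₁ ∈ T, ∀ o₂ ∈ T, o₁ ≠ o₂ → (graphH x₁ x₂).Adj o₁ o₂ := by
    intro o₁ h₁ o₂ h₂ hne
    rw [hT, Finset.mem_map] at h₁ h₂
    obtain ⟨u₁, hu₁, rfl⟩ := h₁
    obtain ⟨u₂, hu₂, rfl⟩ := h₂
    exact hs.1 hu₁ hu₂ (fun h => hne (congrArg _ h))
  by_cases hn : (none : Option (Fin 5 ⊕ Fin 5)) ∈ T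
  · have hsub : T ⊆ {none, L x₁, R x₂} := by
      intro o ho
      by_cases hon : o = none
      · simp [hon]
      · have hadjo := hadj none hn o ho (fun h => hon h.symm)
        match o with
        | none => exact absurd rfl hon
        | some (Sum.inl a) =>
          have := adj_none_L.mp hadjo
          simp [this]
        | some (Sum.inr a) =>
          have := adj_none_R.mp hadjo
          simp [this]
    have := Finset.card_le_card hsub
    rw [hTcard] at this
    have h3 : ({none, L x₁, R x₂} : Finset (Option (Fin 5 ⊕ Fin 5))).card ≤ 3 := by
      apply le_trans (Finset.card_insert_le _ _)
      apply Nat.succ_le_succ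
      apply le_trans (Finset.card_insert_le _ _)
      simp
    omega
  · set TR := T.filter (fun o => ∃ a, o = L a) with hTRdef
    set TL := T.filter (fun o => ¬∃ a, o = L a) with hTLdef
    have hsplit : TR.card + TL.card = 4 := by
      rw [hTRdef, hTLdef, Finset.card_filter_add_card_filter_not, hTcard]
    have hTLle : TL.card ≤ 1 := by
      rw [Finset.card_le_one]
      intro a ha b hb
      rw [hTLdef, Finset.mem_filter] at ha hb
      obtain ⟨haT, haR⟩ := ha
      obtain ⟨hbT, hbR⟩ := hb
      have haX := hTmem a haT
      have hbX := hTmem b hbT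
      have ha' : a = R i ∨ a = R j := by
        rcases haX with h | h | h | h
        · exact absurd (h ▸ haT) hn
        · exact Or.inl h
        · exact Or.inr h
        · exact absurd h haR
      have hb' : b = R i ∨ b = R j := by
        rcases hbX with h | h | h | h
        · exact absurd (h ▸ hbT) hn
        · exact Or.inl h
        · exact Or.inr h
        · exact absurd h hbR
      by_contra hne
      have hadjab := hadj a haT b hbT hne
      rcases ha' with rfl | rfl <;> rcases hb' with rfl | rfl
      · exact hne rfl
      · exact hij (adj_RR.mp hadjab)
      · exact hij ((adj_RR.mp hadjab).symm)
      · exact hne rfl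
    have hTRle : TR.card ≤ 2 := by
      by_contra hc
      push_neg at hc
      obtain ⟨u, husub, hucard⟩ := Finset.exists_subset_card_eq hc
      rw [Finset.card_eq_three] at hucard
      obtain ⟨a, b, d, hab, had, hbd, rfl⟩ := hucard
      have hmem : ∀ o ∈ ({a, b, d} : Finset (Option (Fin 5 ⊕ Fin 5))), ∃ z, o = L z := by
        intro o ho
        have := husub ho
        rw [hTRdef, Finset.mem_filter] at this
        exact this.2
      obtain ⟨za, hza⟩ := hmem a (by simp)
      obtain ⟨zb, hzb⟩ := hmem b (by simp)
      obtain ⟨zd, hzd⟩ := hmem d (by simp)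
      have hT' : ∀ o ∈ ({a, b, d} : Finset (Option (Fin 5 ⊕ Fin 5))), o ∈ T := by
        intro o ho
        have := husub ho
        rw [hTRdef, Finset.mem_filter] at this
        exact this.1
      have h1 : (graphH x₁ x₂).Adj a b := hadj a (hT' a (by simp)) b (hT' b (by simp)) hab
      have h2 : (graphH x₁ x₂).Adj a d := hadj a (hT' a (by simp)) d (hT' d (by simp)) had
      have h3 : (graphH x₁ x₂).Adj b d := hadj b (hT' b (by simp)) d (hT' d (by simp)) hbd
      rw [hza, hzb] at h1
      rw [hza, hzd] at h2
      rw [hzb, hzd] at h3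
      exact cyc_triangle_free za zb zd (adj_LL.mp h1) (adj_LL.mp h2) (adj_LL.mp h3)
    omega

end HAux

open HAux in
/-- **Lemma 6 (3).** For every proper `6`-coloring `c` of the graph `H`, there exists a subset
`X` of the vertices with `ω(H[X]) < 4` on which `c` takes all `6` colors. -/
theorem graphH_coloring_rainbow_set (x₁ x₂ : Fin 5)
    (c : (graphH x₁ x₂).Coloring (Fin 6)) :
    ∃ X : Set (Option (Fin 5 ⊕ Fin 5)),
      ((graphH x₁ x₂).induce X).cliqueNum < 4 ∧
      ∀ i : Fin 6, ∃ x ∈ X, c x = i := by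
  classical
  set f₁ : Fin 5 → Fin 6 := fun a => c (L a) with hf₁def
  set f₂ : Fin 5 → Fin 6 := fun a => c (R a) with hf₂def
  have hf₁ : ∀ a b, cyc.Adj a b → f₁ a ≠ f₁ b := fun a b h => c.valid (adj_LL.mpr h)
  have hf₂ : ∀ a b, cyc.Adj a b → f₂ a ≠ f₂ b := fun a b h => c.valid (adj_RR.mpr h)
  have hdisjLR : ∀ a b, f₁ a ≠ f₂ b := fun a b => c.valid (adj_LR a b)
  set S₁ : Finset (Fin 6) := Finset.image f₁ Finset.univ with hS₁def
  set S₂ : Finset (Fin 6) := Finset.image f₂ Finset.univ with hS₂def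
  have hdis : Disjoint S₁ S₂ := by
    rw [Finset.disjoint_left]
    rintro m hm₁ hm₂
    rw [hS₁def, Finset.mem_image] at hm₁
    rw [hS₂def, Finset.mem_image] at hm₂
    obtain ⟨a, -, ha⟩ := hm₁
    obtain ⟨b, -, hb⟩ := hm₂
    exact hdisjLR a b (ha.trans hb.symm)
  have hcard : ∀ (f : Fin 5 → Fin 6), (∀ a b, cyc.Adj a b → f a ≠ f b) →
      3 ≤ (Finset.image f Finset.univ).card := by
    intro f hf
    obtain ⟨p, q, r, hpq, hpr, hqr⟩ := cyc_three_colors f hf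
    have hsub : ({f p, f q, f r} : Finset (Fin 6)) ⊆ Finset.image f Finset.univ := by
      intro m hm
      simp only [Finset.mem_insert, Finset.mem_singleton] at hm
      rcases hm with rfl | rfl | rfl <;> exact Finset.mem_image_of_mem f (Finset.mem_univ _)
    have h3 : ({f p, f q, f r} : Finset (Fin 6)).card = 3 := by
      rw [Finset.card_eq_three]
      exact ⟨f p, f q, f r, hpq, hpr, hqr, rfl⟩
    calc 3 = ({f p, f q, f r} : Finset (Fin 6)).card := h3.symm
      _ ≤ _ := Finset.card_le_card hsub
  have h31 : 3 ≤ S₁.card := hcard f₁ hf₁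
  have h32 : 3 ≤ S₂.card := hcard f₂ hf₂
  have hunion_card : S₁.card + S₂.card ≤ 6 := by
    rw [← Finset.card_union_of_disjoint hdis]
    calc (S₁ ∪ S₂).card ≤ Fintype.card (Fin 6) := Finset.card_le_univ _
      _ = 6 := by simp
  have hc1 : S₁.card = 3 := by omega
  have hc2 : S₂.card = 3 := by omega
  have huniv : S₁ ∪ S₂ = Finset.univ := by
    apply Finset.eq_univ_of_card
    rw [Finset.card_union_of_disjoint hdis, hc1, hc2]
    simp
  set t : Fin 6 := c none with htdef
  have ht : t ∈ S₁ ∪ S₂ := huniv ▸ Finset.mem_univ t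
  rw [Finset.mem_union] at ht
  rcases ht with ht | ht
  · -- c none is a colour of the left cycle
    rw [hS₁def, Finset.mem_image] at ht
    obtain ⟨k, -, hk⟩ := ht
    obtain ⟨i, j, hij, hne, hi, hj, hij'⟩ := cyc_pair f₁ hf₁ t ⟨k, hk⟩
    refine ⟨XL i j, ?_, ?_⟩
    · haveI : Fintype (XL i j : Set (Option (Fin 5 ⊕ Fin 5))) := Fintype.ofFinite _
      exact cliqueNum_lt_of_cliqueFree _ (cliqueFree_XL x₁ x₂ i j hij)
    · intro m
      have hm : m ∈ S₁ ∪ S₂ := huniv ▸ Finset.mem_univ m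
      rw [Finset.mem_union] at hm
      rcases hm with hm | hm
      · -- m is a left-cycle colour; the triple {t, f₁ i, f₁ j} equals S₁
        have hsub : ({t, f₁ i, f₁ j} : Finset (Fin 6)) ⊆ S₁ := by
          intro z hz
          simp only [Finset.mem_insert, Finset.mem_singleton] at hz
          rcases hz with rfl | rfl | rfl
          · exact hk ▸ Finset.mem_image_of_mem f₁ (Finset.mem_univ k)
          · exact Finset.mem_image_of_mem f₁ (Finset.mem_univ i)
          · exact Finset.mem_image_of_mem f₁ (Finset.mem_univ j)
        have h3 : ({t, f₁ i, f₁ j} : Finset (Fin 6)).card = 3 := by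
          rw [Finset.card_eq_three]
          exact ⟨t, f₁ i, f₁ j, fun h => hi h.symm, fun h => hj h.symm, hij', rfl⟩
        have heq : ({t, f₁ i, f₁ j} : Finset (Fin 6)) = S₁ :=
          Finset.eq_of_subset_of_card_le hsub (by omega)
        rw [← heq] at hm
        simp only [Finset.mem_insert, Finset.mem_singleton] at hm
        rcases hm with rfl | rfl | rfl
        · exact ⟨none, Or.inl rfl, rfl⟩
        · exact ⟨L i, Or.inr (Or.inl rfl), rfl⟩
        · exact ⟨L j, Or.inr (Or.inr (Or.inl rfl)), rfl⟩
      · rw [hS₂def, Finset.mem_image] at hm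
        obtain ⟨a, -, ha⟩ := hm
        exact ⟨R a, Or.inr (Or.inr (Or.inr ⟨a, rfl⟩)), ha⟩
  · -- c none is a colour of the right cycle
    rw [hS₂def, Finset.mem_image] at ht
    obtain ⟨k, -, hk⟩ := ht
    obtain ⟨i, j, hij, hne, hi, hj, hij'⟩ := cyc_pair f₂ hf₂ t ⟨k, hk⟩
    refine ⟨XR i j, ?_, ?_⟩
    · haveI : Fintype (XR i j : Set (Option (Fin 5 ⊕ Fin 5))) := Fintype.ofFinite _
      exact cliqueNum_lt_of_cliqueFree _ (cliqueFree_XR x₁ x₂ i j hij)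
    · intro m
      have hm : m ∈ S₁ ∪ S₂ := huniv ▸ Finset.mem_univ m
      rw [Finset.mem_union] at hm
      rcases hm with hm | hm
      · rw [hS₁def, Finset.mem_image] at hm
        obtain ⟨a, -, ha⟩ := hm
        exact ⟨L a, Or.inr (Or.inr (Or.inr ⟨a, rfl⟩)), ha⟩
      · have hsub : ({t, f₂ i, f₂ j} : Finset (Fin 6)) ⊆ S₂ := by
          intro z hz
          simp only [Finset.mem_insert, Finset.mem_singleton] at hz
          rcases hz with rfl | rfl | rfl
          · exact hk ▸ Finset.mem_image_of_mem f₂ (Finset.mem_univ k)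
          · exact Finset.mem_image_of_mem f₂ (Finset.mem_univ i)
          · exact Finset.mem_image_of_mem f₂ (Finset.mem_univ j)
        have h3 : ({t, f₂ i, f₂ j} : Finset (Fin 6)).card = 3 := by
          rw [Finset.card_eq_three]
          exact ⟨t, f₂ i, f₂ j, fun h => hi h.symm, fun h => hj h.symm, hij', rfl⟩
        have heq : ({t, f₂ i, f₂ j} : Finset (Fin 6)) = S₂ :=
          Finset.eq_of_subset_of_card_le hsub (by omega)
        rw [← heq] at hm
        simp only [Finset.mem_insert, Finset.mem_singleton] at hm
        rcases hm with rfl | rfl | rfl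
        · exact ⟨none, Or.inl rfl, rfl⟩
        · exact ⟨R i, Or.inr (Or.inl rfl), rfl⟩
        · exact ⟨R j, Or.inr (Or.inr (Or.inl rfl)), rfl⟩
end

section
/- Let H be a graph on 11 vertices satisfying: (1) ω(H) < 5; (2) V(H) partitions into 3 cliques; (3) every proper 6-coloring of H takes all 6 colors on some subset X ⊆ V(H) with ω(H[X]) < 4. Let G be a graph with more than 12 vertices containing H as an induced subgraph such that: the set W := V(G) ∖ V(H) is independent in G, every vertex of W has its neighborhood in G equal to some subset X ⊆ V(H) with ω(H[X]) < 4, and for every subset X ⊆ V(H) with ω(H[X]) < 4 there is at least one vertex of W whose neighborhood equals X. Then the cochromatic number of G equals 4. -/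
variable {V : Type*} [Fintype V]

lemma clique_ncard_le_cliqueNum' (G : SimpleGraph V)
    {X F : Set V} (hFX : F ⊆ X) (hF : G.IsClique F) :
    F.ncard ≤ (G.induce X).cliqueNum := by
  classical
  haveI : Fintype ↥X := (Set.toFinite X).fintype
  set A : Set ↥X := Subtype.val ⁻¹' F with hA
  have hclique : (G.induce X).IsClique A := by
    intro a ha b hb hne
    exact hF ha hb (fun h => hne (Subtype.ext h))
  have himg : Subtype.val '' A = F := by
    ext x; constructor
    · rintro ⟨⟨y, hy⟩, hyA, rfl⟩; exact hyA
    · intro hx; exact ⟨⟨x, hFX hx⟩, hx, rfl⟩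
  have h1 : F.ncard = A.ncard := by
    rw [← himg, Set.ncard_image_of_injective _ Subtype.val_injective]
  rw [h1, Set.ncard_eq_toFinset_card']
  exact @SimpleGraph.IsClique.card_le_cliqueNum _ _ _ A.toFinset (by simpa using hclique)

lemma cliqueNum_singleton' {V : Type*} (G : SimpleGraph V) (t : V) :
    (G.induce {t}).cliqueNum < 4 := by
  haveI : Unique ↥({t} : Set V) := Set.uniqueSingleton t
  haveI : Fintype ↥({t} : Set V) := Unique.fintype
  obtain ⟨s, hs⟩ := (G.induce ({t} : Set V)).exists_isNClique_cliqueNum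
  have h1 : s.card ≤ 1 := by
    have := Finset.card_le_card (Finset.subset_univ s)
    simpa using this
  have := hs.card_eq
  omega

lemma indep_inter_ncard_le' (G : SimpleGraph V) (S : Set V)
    (p3 : ↥S → Fin 3) (hp3 : ∀ i, (G.induce S).IsClique (p3 ⁻¹' {i}))
    {F : Set V} (hF : G.IsIndependentSet F) : (F ∩ S).ncard ≤ 3 := by
  classical
  have hinj : Function.Injective (fun x : ↥(F ∩ S) => p3 ⟨(x : V), x.2.2⟩) := by
    intro x y hxy
    by_contra hne
    have hvne : (x : V) ≠ (y : V) := fun h => hne (Subtype.ext h)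
    have hne' : (⟨(x : V), x.2.2⟩ : ↥S) ≠ ⟨(y : V), y.2.2⟩ :=
      fun h => hvne (congrArg (Subtype.val : ↥S → V) h)
    have hadj : (G.induce S).Adj ⟨(x : V), x.2.2⟩ ⟨(y : V), y.2.2⟩ :=
      hp3 (p3 ⟨(x : V), x.2.2⟩)
        (show (⟨(x : V), x.2.2⟩ : ↥S) ∈ p3 ⁻¹' {p3 ⟨(x : V), x.2.2⟩} from rfl)
        (show (⟨(y : V), y.2.2⟩ : ↥S) ∈ p3 ⁻¹' {p3 ⟨(x : V), x.2.2⟩} from by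
          simpa using hxy.symm) hne'
    exact hF x.2.1 y.2.1 hvne hadj
  have h1 := Nat.card_le_card_of_injective _ hinj
  calc (F ∩ S).ncard = Nat.card ↥(F ∩ S) := (Nat.card_coe_set_eq _).symm
    _ ≤ Nat.card (Fin 3) := h1
    _ = 3 := by simp

/-- If `H = G.induce S` is an induced subgraph of `G` on `11` vertices with `ω(H) < 5`,
`S` partitioned into `3` cliques, the rainbow-set property for proper `6`-colorings, the
vertices outside `S` forming an independent set whose members have neighborhoods exactly the
subsets `X ⊆ S` with `ω(H[X]) < 4` (each such subset being realized), and if `G` has more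
than `12` vertices, then `ζ(G) = 4`. -/
theorem cochromaticNumber_eq_four_of_extension (G : SimpleGraph V) (S : Set V)
    (hcard : S.ncard = 11)
    (hH1 : (G.induce S).cliqueNum < 5)
    (hH2 : ∃ p : ↥S → Fin 3, ∀ i, (G.induce S).IsClique (p ⁻¹' {i}))
    (hH3 : ∀ c : (G.induce S).Coloring (Fin 6), ∃ X : Set V, X ⊆ S ∧
      (G.induce X).cliqueNum < 4 ∧ ∀ i : Fin 6, ∃ x : ↥S, (x : V) ∈ X ∧ c x = i)
    (hW : G.IsIndependentSet Sᶜ)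
    (hnbr : ∀ w ∉ S, ∃ X : Set V, X ⊆ S ∧ (G.induce X).cliqueNum < 4 ∧
      G.neighborSet w = X)
    (hall : ∀ X : Set V, X ⊆ S → (G.induce X).cliqueNum < 4 →
      ∃ w, w ∉ S ∧ G.neighborSet w = X)
    (hbig : 12 < Fintype.card V) :
    G.cochromaticNumber = 4 := by
  classical
  obtain ⟨p3, hp3⟩ := hH2
  -- membership of 4
  have hcast3 : ∀ x : Fin 3, x.castSucc ≠ (3 : Fin 4) := by decide
  have h4mem : 4 ∈ {k | ∃ p : V → Fin k, ∀ i, G.IsHomogeneousSet (p ⁻¹' {i})} := by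
    refine ⟨fun v => if h : v ∈ S then (p3 ⟨v, h⟩).castSucc else 3, fun i => ?_⟩
    by_cases hi : i = 3
    · subst hi
      left
      have hsub : ((fun v => if h : v ∈ S then (p3 ⟨v, h⟩).castSucc else 3) ⁻¹'
          ({3} : Set (Fin 4))) ⊆ Sᶜ := by
        intro v hv
        simp only [Set.mem_preimage, Set.mem_singleton_iff] at hv
        intro hvS
        rw [dif_pos hvS] at hv
        exact hcast3 _ hv
      exact Set.Pairwise.mono hsub hW
    · right
      intro u hu v hv huv
      simp only [Set.mem_preimage, Set.mem_singleton_iff] at hu hv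
      have hus : u ∈ S := by
        by_contra h; rw [dif_neg h] at hu; exact hi hu.symm
      have hvs : v ∈ S := by
        by_contra h; rw [dif_neg h] at hv; exact hi hv.symm
      rw [dif_pos hus] at hu
      rw [dif_pos hvs] at hv
      have hpe : p3 ⟨v, hvs⟩ = p3 ⟨u, hus⟩ := by
        have := hu.trans hv.symm
        exact (Fin.castSucc_injective 3 this).symm
      exact hp3 (p3 ⟨u, hus⟩) rfl hpe (fun h => huv (congrArg Subtype.val h))
  -- lower bound
  have hlow : ∀ k ∈ {k | ∃ p : V → Fin k, ∀ i, G.IsHomogeneousSet (p ⁻¹' {i})},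
      4 ≤ k := by
    rintro k ⟨p, hp⟩
    by_contra hk4
    push_neg at hk4
    have hV : Nonempty V := Fintype.card_pos_iff.mp (by omega)
    have hk0 : k ≠ 0 := by
      rintro rfl
      exact (p (Classical.arbitrary V)).elim0
    -- sum of fibers over S
    haveI : Fintype ↥S := (Set.toFinite S).fintype
    have hsum : ∑ i, ((p ⁻¹' {i}) ∩ S).ncard = 11 := by
      have hcardS : Fintype.card ↥S = 11 := by
        rw [← Nat.card_eq_fintype_card, Nat.card_coe_set_eq, hcard]
      have hfib := Finset.card_eq_sum_card_fiberwise
        (f := fun x : ↥S => p (x : V)) (s := Finset.univ) (t := Finset.univ)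
        (fun x _ => Finset.mem_univ _)
      rw [Finset.card_univ, hcardS] at hfib
      have hstep : ∀ i : Fin k, ((p ⁻¹' {i}) ∩ S).ncard
          = (Finset.filter (fun x : ↥S => p (x : V) = i) Finset.univ).card := by
        intro i
        have hfe : Finset.filter (fun x : ↥S => p (x : V) = i) Finset.univ
            = Set.toFinset (Subtype.val ⁻¹' ((p ⁻¹' {i}) ∩ S) : Set ↥S) := by
          ext x
          rw [Finset.mem_filter, Set.mem_toFinset]
          simp [Set.mem_toFinset, x.2]
        have himg : Subtype.val '' (Subtype.val ⁻¹' ((p ⁻¹' {i}) ∩ S) : Set ↥S)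
            = (p ⁻¹' {i}) ∩ S := by
          ext x; constructor
          · rintro ⟨⟨y, hy⟩, hyA, rfl⟩; exact hyA
          · rintro ⟨hx1, hx2⟩; exact ⟨⟨x, hx2⟩, ⟨hx1, hx2⟩, rfl⟩
        have hni := Set.ncard_image_of_injective
          (Subtype.val ⁻¹' ((p ⁻¹' {i}) ∩ S) : Set ↥S) Subtype.val_injective
        rw [himg] at hni
        rw [hfe, ← Set.ncard_eq_toFinset_card']
        exact hni
      calc ∑ i, ((p ⁻¹' {i}) ∩ S).ncard
          = ∑ i, (Finset.filter (fun x : ↥S => p (x : V) = i) Finset.univ).card :=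
            Finset.sum_congr rfl (fun i _ => hstep i)
        _ = 11 := hfib.symm
    have hle4 : ∀ i, ((p ⁻¹' {i}) ∩ S).ncard ≤ 4 := by
      intro i
      rcases hp i with hind | hcl
      · exact le_trans (indep_inter_ncard_le' G S p3 hp3 hind) (by norm_num)
      · have hsub : (p ⁻¹' {i}) ∩ S ⊆ S := Set.inter_subset_right
        have hcl' : G.IsClique ((p ⁻¹' {i}) ∩ S) := hcl.subset Set.inter_subset_left
        have := clique_ncard_le_cliqueNum' G hsub hcl'
        omega
    have hk3 : k = 3 := by
      have h11 : (11 : ℕ) ≤ 4 * k := by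
        calc (11 : ℕ) = ∑ i, ((p ⁻¹' {i}) ∩ S).ncard := hsum.symm
          _ ≤ ∑ _i : Fin k, 4 := Finset.sum_le_sum (fun i _ => hle4 i)
          _ = 4 * k := by simp [Finset.sum_const, mul_comm]
      omega
    subst hk3
    -- fibers with full intersection lie in S
    have hfibS : ∀ i, ((p ⁻¹' {i}) ∩ S).ncard = 4 → (p ⁻¹' {i}) ⊆ S := by
      intro i h4i
      have hcl : G.IsClique (p ⁻¹' {i}) := by
        rcases hp i with hind | hcl
        · have := indep_inter_ncard_le' G S p3 hp3 hind
          omega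
        · exact hcl
      intro w hw
      by_contra hwS
      obtain ⟨X, hXS, hX4, hNX⟩ := hnbr w hwS
      have hsub : (p ⁻¹' {i}) ∩ S ⊆ X := by
        rintro s ⟨hsf, hsS⟩
        have hne : w ≠ s := fun h => hwS (h ▸ hsS)
        have hadj : G.Adj w s := hcl hw hsf hne
        rw [← hNX]
        exact hadj
      have := clique_ncard_le_cliqueNum' G hsub (hcl.subset Set.inter_subset_left)
      omega
    -- the key contradiction
    have key : ∀ j : Fin 3, ((p ⁻¹' {j}) ∩ S).ncard = 3 → (∀ i, i ≠ j → ((p ⁻¹' {i}) ∩ S).ncard = 4) → False := by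
      intro j hj hoth
      have hfin : ((p ⁻¹' {j}) ∩ S).Finite := Set.toFinite _
      have hpos : ((p ⁻¹' {j}) ∩ S).Nonempty := by
        rw [← Set.ncard_pos hfin]
        omega
      obtain ⟨t, htf, htS⟩ := hpos
      obtain ⟨w, hwS, hNw⟩ := hall {t} (by simpa using htS) (cliqueNum_singleton' G t)
      have hwj : p w = j := by
        by_contra hne
        exact hwS (hfibS (p w) (hoth _ hne) rfl)
      have hadj : G.Adj w t := by
        have : t ∈ G.neighborSet w := by rw [hNw]; exact rfl
        exact this
      have hwt : w ≠ t := fun h => hwS (h ▸ htS)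
      have hwmem : w ∈ p ⁻¹' {j} := by
        simp [hwj]
      rcases hp j with hind | hcl
      · exact hind hwmem htf hwt hadj
      · have h2 : 1 < ((p ⁻¹' {j}) ∩ S).ncard := by omega
        obtain ⟨t', ⟨ht'f, ht'S⟩, ht'ne⟩ := Set.exists_ne_of_one_lt_ncard h2 t
        have hwt' : w ≠ t' := fun h => hwS (h ▸ ht'S)
        have hadj' : G.Adj w t' := hcl hwmem ht'f hwt'
        have : t' ∈ G.neighborSet w := hadj'
        rw [hNw] at this
        exact ht'ne this
    have e3 : ((p ⁻¹' {0}) ∩ S).ncard + ((p ⁻¹' {1}) ∩ S).ncard + ((p ⁻¹' {2}) ∩ S).ncard = 11 := by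
      rw [← hsum, Fin.sum_univ_three]
    have h0 := hle4 0
    have h1 := hle4 1
    have h2 := hle4 2
    have hcases : (((p ⁻¹' {0}) ∩ S).ncard = 3 ∧ ((p ⁻¹' {1}) ∩ S).ncard = 4 ∧ ((p ⁻¹' {2}) ∩ S).ncard = 4) ∨ (((p ⁻¹' {1}) ∩ S).ncard = 3 ∧ ((p ⁻¹' {0}) ∩ S).ncard = 4 ∧ ((p ⁻¹' {2}) ∩ S).ncard = 4)
        ∨ (((p ⁻¹' {2}) ∩ S).ncard = 3 ∧ ((p ⁻¹' {0}) ∩ S).ncard = 4 ∧ ((p ⁻¹' {1}) ∩ S).ncard = 4) := by omega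
    rcases hcases with ⟨a, b, c⟩ | ⟨a, b, c⟩ | ⟨a, b, c⟩
    · exact key 0 a (fun i hi => by fin_cases i <;> simp_all)
    · exact key 1 a (fun i hi => by fin_cases i <;> simp_all)
    · exact key 2 a (fun i hi => by fin_cases i <;> simp_all)
  exact le_antisymm (Nat.sInf_le h4mem) (le_csInf ⟨4, h4mem⟩ hlow)
end

section
/- Let H be a graph on 11 vertices satisfying: (1) ω(H) < 5; (2) V(H) partitions into 3 cliques; (3) every proper 6-coloring of H takes all 6 colors on some subset X ⊆ V(H) with ω(H[X]) < 4; and additionally χ(H) = 6. Let G be a graph containing H as an induced subgraph such that: the set W := V(G) ∖ V(H) is independent in G, every vertex of W has its neighborhood in G equal to some subset X ⊆ V(H) with ω(H[X]) < 4, and for every subset X ⊆ V(H) with ω(H[X]) < 4 there is at least one vertex of W whose neighborhood equals X. Then the chromatic number of G equals 7. -/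
variable {V : Type*} [Fintype V]

/-- If `H = G.induce S` is an induced subgraph of `G` on `11` vertices with `ω(H) < 5`,
`S` partitioned into `3` cliques, the rainbow-set property for proper `6`-colorings and
moreover `χ(H) = 6`, and if the vertices outside `S` form an independent set whose members
have neighborhoods exactly the subsets `X ⊆ S` with `ω(H[X]) < 4` (each such subset being
realized), then `χ(G) = 7`. -/
theorem chromaticNumber_eq_seven_of_extension (G : SimpleGraph V) (S : Set V)
    (hcard : S.ncard = 11)
    (hH1 : (G.induce S).cliqueNum < 5)
    (hH2 : ∃ p : ↥S → Fin 3, ∀ i, (G.induce S).IsClique (p ⁻¹' {i}))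
    (hH3 : ∀ c : (G.induce S).Coloring (Fin 6), ∃ X : Set V, X ⊆ S ∧
      (G.induce X).cliqueNum < 4 ∧ ∀ i : Fin 6, ∃ x : ↥S, (x : V) ∈ X ∧ c x = i)
    (hW : G.IsIndependentSet Sᶜ)
    (hnbr : ∀ w ∉ S, ∃ X : Set V, X ⊆ S ∧ (G.induce X).cliqueNum < 4 ∧
      G.neighborSet w = X)
    (hall : ∀ X : Set V, X ⊆ S → (G.induce X).cliqueNum < 4 →
      ∃ w, w ∉ S ∧ G.neighborSet w = X)
    (hχH : (G.induce S).chromaticNumber = 6) :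
    G.chromaticNumber = 7 := by
  classical
  -- a 6-coloring of the induced subgraph
  have hcol6 : (G.induce S).Colorable 6 := by
    rw [← SimpleGraph.chromaticNumber_le_iff_colorable, hχH]; norm_num
  obtain ⟨c6⟩ := hcol6
  -- upper bound: extend c6 by a new color on Sᶜ
  have hub : G.Colorable 7 := by
    refine ⟨SimpleGraph.Coloring.mk
      (fun v => if h : v ∈ S then (c6 ⟨v, h⟩).castSucc else (6 : Fin 7)) ?_⟩
    intro a b hab
    by_cases ha : a ∈ S <;> by_cases hb : b ∈ S <;> simp only [dif_pos, dif_neg, ha, hb]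
    · have : (G.induce S).Adj ⟨a, ha⟩ ⟨b, hb⟩ := hab
      have := c6.valid this
      simpa [Fin.castSucc_inj] using this
    · simp [Fin.ext_iff]
      omega
    · simp [Fin.ext_iff]
      omega
    · exact absurd hab (hW ha hb hab.ne)
  -- lower bound: G is not 6-colorable
  have hlb : ¬ G.Colorable 6 := by
    rintro ⟨c⟩
    set c' : (G.induce S).Coloring (Fin 6) :=
      SimpleGraph.Coloring.mk (fun x => c (x : V)) (fun h => c.valid h) with hc'
    obtain ⟨X, hXS, hXω, hX⟩ := hH3 c'
    obtain ⟨w, hwS, hwN⟩ := hall X hXS hXω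
    obtain ⟨x, hxX, hxc⟩ := hX (c w)
    have hadj : G.Adj w x := by
      have : (x : V) ∈ G.neighborSet w := hwN ▸ hxX
      exact this
    exact c.valid hadj hxc.symm
  rw [← SimpleGraph.chromaticNumber_le_iff_colorable] at hlb
  push_neg at hlb
  exact le_antisymm (by exact_mod_cast hub.chromaticNumber_le)
    (by exact_mod_cast Order.add_one_le_of_lt hlb)
end

section
/- Let n > 2 and f ≥ 0 be integers, and let G be a graph with ω(G) < n and χ(G) > ζ(G) + f such that every graph G' with strictly fewer vertices than G and ω(G') < n satisfies χ(G') ≤ ζ(G') + f. Then in every partition of V(G) into ζ(G) homogeneous sets, every set of the partition is a clique. -/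
/-- Homogeneity descends to induced subgraphs. -/
lemma homog_descend {V : Type} (G : SimpleGraph V) (t : Set V) (s : Set ↥t) (T : Set V)
    (hsub : ∀ x ∈ s, (x : V) ∈ T) (hT : G.IsHomogeneousSet T) :
    (G.induce t).IsHomogeneousSet s := by
  rcases hT with h | h
  · left
    intro x hx y hy hxy
    have := h (hsub x hx) (hsub y hy) (fun e => hxy (Subtype.coe_injective e))
    simpa using this
  · right
    intro x hx y hy hxy
    have := h (hsub x hx) (hsub y hy) (fun e => hxy (Subtype.coe_injective e))
    simpa using this

/-- If `n > 2`, `f ≥ 0`, `G` is a graph with `ω(G) < n` and `χ(G) > ζ(G) + f` such that every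
graph `G'` on strictly fewer vertices with `ω(G') < n` satisfies `χ(G') ≤ ζ(G') + f`, then in
every partition of `V(G)` into `ζ(G)` homogeneous sets every part is a clique. -/
theorem parts_are_cliques_of_min_counterexample (n f : ℕ) (hn : 2 < n)
    {V : Type} [Fintype V] (G : SimpleGraph V)
    (hω : G.cliqueNum < n)
    (hχ : ((G.cochromaticNumber + f : ℕ) : ℕ∞) < G.chromaticNumber)
    (hmin : ∀ (V' : Type) (inst : Fintype V') (G' : SimpleGraph V'),
      @Fintype.card V' inst < Fintype.card V → G'.cliqueNum < n →
      G'.chromaticNumber ≤ ((@SimpleGraph.cochromaticNumber V' inst G' + f : ℕ) : ℕ∞))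
    (p : V → Fin G.cochromaticNumber)
    (hp : ∀ i, G.IsHomogeneousSet (p ⁻¹' {i})) :
    ∀ i, G.IsClique (p ⁻¹' {i}) := by
  classical
  intro i
  by_contra hclq
  have hind : G.IsIndependentSet (p ⁻¹' {i}) := (hp i).resolve_right hclq
  rw [SimpleGraph.isClique_iff, Set.Pairwise] at hclq
  push_neg at hclq
  obtain ⟨u, hu, v, hv, huv, -⟩ := hclq
  have hk1 : 1 ≤ G.cochromaticNumber := i.pos
  -- the complement
  set t : Set V := (p ⁻¹' {i})ᶜ with htdef
  have hcard : Fintype.card ↥t < Fintype.card V := by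
    apply Fintype.card_subtype_lt (x := u)
    simp only [htdef, Set.mem_compl_iff, not_not]
    exact hu
  have hωle : (G.induce t).cliqueNum ≤ G.cliqueNum := by
    obtain ⟨s, hs, hcard⟩ := SimpleGraph.exists_isNClique_cliqueNum (G := G.induce t)
    have hcl : G.IsClique (s.map ⟨Subtype.val, Subtype.coe_injective⟩ : Finset V) := by
      intro x hx y hy hxy
      simp only [Finset.coe_map, Set.mem_image, Finset.mem_coe] at hx hy
      obtain ⟨a, ha, rfl⟩ := hx
      obtain ⟨b, hb, rfl⟩ := hy
      have hab : a ≠ b := fun e => hxy (by rw [e])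
      have := hs ha hb hab
      simpa using this
    calc (G.induce t).cliqueNum = s.card := hcard.symm
      _ = (s.map ⟨Subtype.val, Subtype.coe_injective⟩).card := (Finset.card_map _).symm
      _ ≤ G.cliqueNum := hcl.card_le_cliqueNum
  -- equivalence removing index i
  have hce : Fintype.card {j : Fin G.cochromaticNumber // j ≠ i} = G.cochromaticNumber - 1 := by
    simp [Fintype.card_subtype_compl]
  let e : {j : Fin G.cochromaticNumber // j ≠ i} ≃ Fin (G.cochromaticNumber - 1) := Fintype.equivFinOfCardEq hce
  have hζ : (G.induce t).cochromaticNumber ≤ G.cochromaticNumber - 1 := by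
    apply Nat.sInf_le
    refine ⟨fun w => e ⟨p w.1, w.2⟩, fun m => ?_⟩
    apply homog_descend G t _ (p ⁻¹' {(e.symm m).1}) ?_ (hp _)
    intro x hx
    simp only [Set.mem_preimage, Set.mem_singleton_iff] at hx ⊢
    have : (⟨p x.1, x.2⟩ : {j : Fin G.cochromaticNumber // j ≠ i}) = e.symm m := by
      apply e.injective; simp [hx]
    exact congrArg Subtype.val this
  have hχ' : (G.induce t).chromaticNumber ≤ ((G.cochromaticNumber - 1 + f : ℕ) : ℕ∞) := by
    calc (G.induce t).chromaticNumber ≤ (((G.induce t).cochromaticNumber + f : ℕ) : ℕ∞) :=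
          hmin _ _ _ hcard (lt_of_le_of_lt hωle hω)
      _ ≤ ((G.cochromaticNumber - 1 + f : ℕ) : ℕ∞) := by exact_mod_cast Nat.add_le_add_right hζ f
  have hcol : (G.induce t).Colorable (G.cochromaticNumber - 1 + f) :=
    (SimpleGraph.chromaticNumber_le_iff_colorable).mp hχ'
  obtain ⟨C⟩ := hcol
  -- color G with G.cochromaticNumber - 1 + f + 1 colors
  have hGcol : G.Colorable (G.cochromaticNumber - 1 + f + 1) := by
    refine ⟨SimpleGraph.Coloring.mk
      (fun w => if h : p w = i then Fin.last _ else (C ⟨w, h⟩).castSucc) ?_⟩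
    intro a b hab
    by_cases ha : p a = i <;> by_cases hb : p b = i
    · exact absurd hab (hind ha hb hab.ne)
    · simp only [dif_pos ha, dif_neg hb]
      exact (Fin.castSucc_lt_last _).ne'
    · simp only [dif_neg ha, dif_pos hb]
      exact (Fin.castSucc_lt_last _).ne
    · simp only [dif_neg ha, dif_neg hb]
      have : (G.induce t).Adj ⟨a, ha⟩ ⟨b, hb⟩ := by simpa using hab
      exact fun h => C.valid this (Fin.castSucc_injective _ h)
  have : G.chromaticNumber ≤ ((G.cochromaticNumber - 1 + f + 1 : ℕ) : ℕ∞) := hGcol.chromaticNumber_le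
  have heq : G.cochromaticNumber - 1 + f + 1 = G.cochromaticNumber + f := by omega
  rw [heq] at this
  exact absurd hχ (not_lt_of_ge this)
end
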